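/- arXiv:2301.00093 — 4 statements merged into one kernel-verified Lean document; each statement's English description precedes it below -/
import Mathlib

section
/- For every k ≥ 1, m ≥ 1 and every subset M ⊆ ℝ^m (given the subspace topology), the map α_k from the ordered configuration space C̃_k(M) to M^k × (S^{m-1})^{k(k-1)} × [0,∞]^{k(k-1)(k-2)}, whose components are (a) the inclusion C̃_k(M) ↪ M^k, (b) for each ordered pair (i,j) with i ≠ j the map π_{ij}(x_1,…,x_k) = (x_i − x_j)/‖x_i − x_j‖ ∈ S^{m-1}, and (c) for each ordered triple (i,j,ℓ) of pairwise distinct indices the map s_{ijℓ}(x_1,…,x_k) = ‖x_i − x_j‖/‖x_i − x_ℓ‖ ∈ [0,∞], is a topological embedding, i.e. a continuous injection that is a homeomorphism onto its image. -/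
open Topology
open scoped ENNReal

noncomputable section

/-- The ordered configuration space of `k` points in a subset `M ⊆ ℝ^m`:
tuples of points of `M` that are pairwise distinct, topologized as a subspace of
`(ℝ^m)^k`. -/
abbrev OrdConfig (m : ℕ) (M : Set (EuclideanSpace ℝ (Fin m))) (k : ℕ) : Type :=
  {x : Fin k → EuclideanSpace ℝ (Fin m) // (∀ i, x i ∈ M) ∧ Function.Injective x}

/-- The index set of ordered pairs `(i,j)` with `i ≠ j`. -/
abbrev ConfigPairs (k : ℕ) : Type := {p : Fin k × Fin k // p.1 ≠ p.2}

/-- The index set of ordered triples `(i,j,ℓ)` of pairwise distinct indices. -/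
abbrev ConfigTriples (k : ℕ) : Type :=
  {t : Fin k × Fin k × Fin k // t.1 ≠ t.2.1 ∧ t.1 ≠ t.2.2 ∧ t.2.1 ≠ t.2.2}

/-- The codomain `M^k × (S^{m-1})^{k(k-1)} × [0,∞]^{k(k-1)(k-2)}` of the map `α_k`
defining the Fulton–MacPherson configuration space.  Here `S^{m-1}` is the unit
sphere in `ℝ^m` and `[0,∞]` is realized as `ℝ≥0∞`. -/
abbrev FMTarget (m : ℕ) (M : Set (EuclideanSpace ℝ (Fin m))) (k : ℕ) : Type :=
  (Fin k → M) × (ConfigPairs k → Metric.sphere (0 : EuclideanSpace ℝ (Fin m)) 1) ×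
    (ConfigTriples k → ℝ≥0∞)

/-- The map `α_k` whose components are the inclusion into `M^k`, the normalized
difference maps `π_{ij}(x) = (x_i - x_j)/‖x_i - x_j‖`, and the ratio maps
`s_{ijℓ}(x) = ‖x_i - x_j‖/‖x_i - x_ℓ‖ ∈ [0,∞]`. -/
def fmMap (m : ℕ) (M : Set (EuclideanSpace ℝ (Fin m))) (k : ℕ) (x : OrdConfig m M k) :
    FMTarget m M k :=
  ⟨fun i => ⟨x.1 i, x.2.1 i⟩,
   fun p =>
     ⟨‖x.1 p.1.1 - x.1 p.1.2‖⁻¹ • (x.1 p.1.1 - x.1 p.1.2), by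
       have hne : x.1 p.1.1 - x.1 p.1.2 ≠ 0 :=
         sub_ne_zero.mpr fun h => p.2 (x.2.2 h)
       rw [mem_sphere_zero_iff_norm, norm_smul, norm_inv, norm_norm,
         inv_mul_cancel₀ (norm_ne_zero_iff.mpr hne)]⟩,
   fun t => ENNReal.ofReal (‖x.1 t.1.1 - x.1 t.1.2.1‖ / ‖x.1 t.1.1 - x.1 t.1.2.2‖)⟩

/-- For every `k ≥ 1`, `m ≥ 1` and every subset `M ⊆ ℝ^m`, the map
`α_k : C̃_k(M) → M^k × (S^{m-1})^{k(k-1)} × [0,∞]^{k(k-1)(k-2)}` is a topological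
embedding: a continuous injection that is a homeomorphism onto its image. -/
theorem fmMap_isEmbedding (m k : ℕ) (hm : 1 ≤ m) (hk : 1 ≤ k)
    (M : Set (EuclideanSpace ℝ (Fin m))) :
    IsEmbedding (fmMap m M k) := by
  -- continuity of the coordinate evaluation maps
  have hval : Continuous (fun x : OrdConfig m M k => (x.1 : Fin k → EuclideanSpace ℝ (Fin m))) :=
    continuous_subtype_val
  have hev : ∀ i : Fin k, Continuous (fun x : OrdConfig m M k => x.1 i) :=
    fun i => (continuous_apply i).comp hval
  -- continuity of fmMap
  have hcont : Continuous (fmMap m M k) := by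
    refine Continuous.prodMk ?_ (Continuous.prodMk ?_ ?_)
    · exact continuous_pi fun i => Continuous.subtype_mk (hev i) _
    · refine continuous_pi fun p => Continuous.subtype_mk ?_ _
      have hsub : Continuous (fun x : OrdConfig m M k => x.1 p.1.1 - x.1 p.1.2) :=
        (hev p.1.1).sub (hev p.1.2)
      have hne : ∀ x : OrdConfig m M k, ‖x.1 p.1.1 - x.1 p.1.2‖ ≠ 0 := fun x =>
        norm_ne_zero_iff.mpr (sub_ne_zero.mpr fun h => p.2 (x.2.2 h))
      exact ((hsub.norm.inv₀ hne).smul hsub)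
    · refine continuous_pi fun t => ENNReal.continuous_ofReal.comp ?_
      have hne : ∀ x : OrdConfig m M k, ‖x.1 t.1.1 - x.1 t.1.2.2‖ ≠ 0 := fun x =>
        norm_ne_zero_iff.mpr (sub_ne_zero.mpr fun h => t.2.2.1 (x.2.2 h))
      exact ((hev t.1.1).sub (hev t.1.2.1)).norm.div ((hev t.1.1).sub (hev t.1.2.2)).norm hne
  -- the first component is an embedding
  have hfst : IsEmbedding (fun x : OrdConfig m M k => (fmMap m M k x).1) := by
    have hψ : IsEmbedding
        (fun f : Fin k → M => (fun i => (f i : EuclideanSpace ℝ (Fin m)))) := by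
      refine ⟨⟨?_⟩, ?_⟩
      · simp only [Pi.topologicalSpace, instTopologicalSpaceSubtype, induced_iInf,
          induced_compose]
        rfl
      · intro f g h
        funext i
        exact Subtype.ext (congrFun h i)
    have hφcont : Continuous (fun x : OrdConfig m M k => (fmMap m M k x).1) :=
      continuous_pi fun i => Continuous.subtype_mk (hev i) _
    refine IsEmbedding.of_comp hφcont hψ.continuous ?_
    have : (fun f : Fin k → M => (fun i => (f i : EuclideanSpace ℝ (Fin m)))) ∘
        (fun x : OrdConfig m M k => (fmMap m M k x).1) =
        fun x : OrdConfig m M k => (x.1 : Fin k → EuclideanSpace ℝ (Fin m)) := rfl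
    rw [this]
    exact IsEmbedding.subtypeVal
  exact IsEmbedding.of_comp hcont continuous_fst hfst

end
end

section
/- Let k ≥ 1, m ≥ 1, and let M ⊆ ℝ^m be a compact subset. Then the Fulton–MacPherson configuration space C̄_k(M), defined as the closure of the image of the map α_k : C̃_k(M) → M^k × (S^{m-1})^{k(k-1)} × [0,∞]^{k(k-1)(k-2)}, is a compact Hausdorff space, and the corestriction of α_k gives a topological embedding of C̃_k(M) into C̄_k(M) with dense image. In particular, C̄_k(M) is a compactification of the ordered configuration space C̃_k(M). -/
open Topology
open scoped ENNReal

noncomputable section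

/-- The Fulton–MacPherson configuration space `C̄_k(M)`: the closure of the image of
the map `α_k`, with the subspace topology. -/
abbrev FMSpace (m : ℕ) (M : Set (EuclideanSpace ℝ (Fin m))) (k : ℕ) : Type :=
  ↥(closure (Set.range (fmMap m M k)))

/-- The corestriction `C̃_k(M) → C̄_k(M)` of the map `α_k`. -/
def fmCorestrict (m : ℕ) (M : Set (EuclideanSpace ℝ (Fin m))) (k : ℕ)
    (x : OrdConfig m M k) : FMSpace m M k :=
  ⟨fmMap m M k x, subset_closure (Set.mem_range_self x)⟩

lemma fmMap_continuous (m k : ℕ) (M : Set (EuclideanSpace ℝ (Fin m))) :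
    Continuous (fmMap m M k) := by
  have hxi : ∀ i : Fin k, Continuous fun x : OrdConfig m M k => x.1 i := fun i =>
    (continuous_apply i).comp continuous_subtype_val
  refine Continuous.prodMk ?_ (Continuous.prodMk ?_ ?_)
  · exact continuous_pi fun i => (hxi i).subtype_mk _
  · refine continuous_pi fun p => Continuous.subtype_mk ?_ _
    have hsub : Continuous fun x : OrdConfig m M k => x.1 p.1.1 - x.1 p.1.2 :=
      (hxi p.1.1).sub (hxi p.1.2)
    exact (hsub.norm.inv₀ fun x =>
      norm_ne_zero_iff.mpr (sub_ne_zero.mpr fun h => p.2 (x.2.2 h))).smul hsub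
  · refine continuous_pi fun t => ENNReal.continuous_ofReal.comp ?_
    exact ((hxi t.1.1).sub (hxi t.1.2.1)).norm.div ((hxi t.1.1).sub (hxi t.1.2.2)).norm
      fun x => norm_ne_zero_iff.mpr (sub_ne_zero.mpr fun h => t.2.2.1 (x.2.2 h))

set_option synthInstance.maxHeartbeats 1000000 in
/-- Let `k ≥ 1`, `m ≥ 1` and let `M ⊆ ℝ^m` be a compact subset.
Then the Fulton–MacPherson configuration space `C̄_k(M)` is a compact Hausdorff
space, and the corestriction of `α_k` is a topological embedding of `C̃_k(M)` into
`C̄_k(M)` with dense image; in particular `C̄_k(M)` is a compactification of the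
ordered configuration space `C̃_k(M)`. -/
theorem fmSpace_compactification (m k : ℕ) (hm : 1 ≤ m) (hk : 1 ≤ k)
    (M : Set (EuclideanSpace ℝ (Fin m))) (hM : IsCompact M) :
    CompactSpace (FMSpace m M k) ∧ T2Space (FMSpace m M k) ∧
      IsEmbedding (fmCorestrict m M k) ∧ DenseRange (fmCorestrict m M k) := by
  haveI : CompactSpace M := isCompact_iff_compactSpace.mp hM
  haveI : CompactSpace (FMTarget m M k) := inferInstance
  haveI h1 : T2Space (Fin k → M) := inferInstance
  haveI h2 : T2Space (ConfigPairs k → Metric.sphere (0 : EuclideanSpace ℝ (Fin m)) 1) :=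
    inferInstance
  haveI h3 : T2Space (ConfigTriples k → ℝ≥0∞) := inferInstance
  haveI : T2Space (FMTarget m M k) := Prod.t2Space
  have hc : Continuous (fmCorestrict m M k) := (fmMap_continuous m k M).subtype_mk _
  refine ⟨?_, inferInstance, ?_, ?_⟩
  · exact isCompact_iff_compactSpace.mp isClosed_closure.isCompact
  · have hg : Continuous (fun y : FMSpace m M k =>
        fun i => (y.1.1 i : EuclideanSpace ℝ (Fin m))) :=
      continuous_pi fun i => continuous_subtype_val.comp
        ((continuous_apply i).comp (continuous_fst.comp continuous_subtype_val))
    refine IsEmbedding.of_comp hc hg ?_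
    have : (fun y : FMSpace m M k => fun i => (y.1.1 i : EuclideanSpace ℝ (Fin m))) ∘
        fmCorestrict m M k = Subtype.val := rfl
    rw [this]
    exact IsEmbedding.subtypeVal
  · intro y
    rw [closure_subtype]
    have : Subtype.val '' Set.range (fmCorestrict m M k) = Set.range (fmMap m M k) := by
      ext z
      constructor
      · rintro ⟨w, ⟨x, rfl⟩, rfl⟩; exact ⟨x, rfl⟩
      · rintro ⟨x, rfl⟩; exact ⟨fmCorestrict m M k x, ⟨x, rfl⟩, rfl⟩
    rw [this]
    exact y.2

end
end

section
/- Let k ≥ 1, let M ⊆ ℝ^m and N ⊆ ℝ^n be compact smooth submanifolds without boundary, and let f : M → N be a smooth embedding. The k-fold product f^{×k} restricts to a continuous map C̃_k(M) → C̃_k(N) of ordered configuration spaces. Then there exists a unique continuous map f̄_k : C̄_k(M) → C̄_k(N) between the Fulton–MacPherson configuration spaces such that f̄_k ∘ α_k^M = α_k^N ∘ f^{×k}, where α_k^M : C̃_k(M) → C̄_k(M) and α_k^N : C̃_k(N) → C̄_k(N) are the corestrictions of the defining maps; moreover f̄_k is a topological embedding. -/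
open Topology
open scoped ENNReal

set_option maxHeartbeats 1000000
set_option synthInstance.maxHeartbeats 400000

noncomputable section

open scoped Manifold

/-- The map `C̃_k(M) → C̃_k(N)` obtained by restricting the `k`-fold product
`f^{×k}` of an injection `f : M → N`. -/
def mapConfig {m m' : ℕ} {M : Set (EuclideanSpace ℝ (Fin m))}
    {N : Set (EuclideanSpace ℝ (Fin m'))} (f : ↥M → ↥N) (hf : Function.Injective f)
    (k : ℕ) (x : OrdConfig m M k) : OrdConfig m' N k :=
  ⟨fun i => (f ⟨x.1 i, x.2.1 i⟩ : EuclideanSpace ℝ (Fin m')),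
   ⟨fun i => (f ⟨x.1 i, x.2.1 i⟩).2, fun a b h => by
     have h1 : f ⟨x.1 a, x.2.1 a⟩ = f ⟨x.1 b, x.2.1 b⟩ := Subtype.ext h
     have h2 := congrArg Subtype.val (hf h1)
     exact x.2.2 h2⟩⟩

open Filter Asymptotics

abbrev Eu (d : ℕ) := EuclideanSpace ℝ (Fin d)

/-- Injectivity of the normalization of an injective continuous linear map on unit vectors. -/
lemma norm_smul_self_inj {E F : Type*} [NormedAddCommGroup E] [NormedSpace ℝ E]
    [NormedAddCommGroup F] [NormedSpace ℝ F]
    (A : E →L[ℝ] F) (hA : Function.Injective A) {v w : E}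
    (hv : ‖v‖ = 1) (hw : ‖w‖ = 1)
    (h : ‖A v‖⁻¹ • A v = ‖A w‖⁻¹ • A w) : v = w := by
  have hv0 : v ≠ 0 := by intro h0; rw [h0, norm_zero] at hv; norm_num at hv
  have hw0 : w ≠ 0 := by intro h0; rw [h0, norm_zero] at hw; norm_num at hw
  have hAv : A v ≠ 0 := fun h0 => hv0 (hA (by rw [h0, map_zero]))
  have hAw : A w ≠ 0 := fun h0 => hw0 (hA (by rw [h0, map_zero]))
  have hAvn : ‖A v‖ ≠ 0 := norm_ne_zero_iff.mpr hAv
  have hAwn : ‖A w‖ ≠ 0 := norm_ne_zero_iff.mpr hAw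
  have hcpos : 0 < ‖A v‖ * ‖A w‖⁻¹ :=
    mul_pos (norm_pos_iff.mpr hAv) (inv_pos.mpr (norm_pos_iff.mpr hAw))
  have h3 : v = (‖A v‖ * ‖A w‖⁻¹) • w := by
    apply hA
    rw [map_smul]
    calc A v = ‖A v‖ • (‖A v‖⁻¹ • A v) := by
          rw [smul_smul, mul_inv_cancel₀ hAvn, one_smul]
      _ = ‖A v‖ • (‖A w‖⁻¹ • A w) := by rw [h]
      _ = (‖A v‖ * ‖A w‖⁻¹) • A w := by rw [smul_smul]
  have h4 : (1:ℝ) = ‖A v‖ * ‖A w‖⁻¹ := by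
    have h5 := congrArg norm h3
    rw [hv, norm_smul, hw, mul_one, Real.norm_eq_abs, abs_of_pos hcpos] at h5
    exact h5
  rw [h3, ← h4, one_smul]

/-- Along two sequences converging to `a` whose normalized differences converge,
the differences of `g` divided by `‖p - q‖` converge to `A v`. -/
lemma flat_dir_tendsto {E F : Type*} [NormedAddCommGroup E] [NormedSpace ℝ E]
    [NormedAddCommGroup F] [NormedSpace ℝ F]
    {g : E → F} {A : E →L[ℝ] F} {a : E} (hg : HasStrictFDerivAt g A a)
    {p q : ℕ → E} (hp : Tendsto p atTop (𝓝 a)) (hq : Tendsto q atTop (𝓝 a))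
    {v : E} (hv : Tendsto (fun t => ‖p t - q t‖⁻¹ • (p t - q t)) atTop (𝓝 v)) :
    Tendsto (fun t => ‖p t - q t‖⁻¹ • (g (p t) - g (q t))) atTop (𝓝 (A v)) := by
  have hpq : Tendsto (fun t => (p t, q t)) atTop (𝓝 (a, a)) := hp.prodMk_nhds hq
  have herr := hg.isLittleO.comp_tendsto hpq
  have h0 : Tendsto (fun t => ‖p t - q t‖⁻¹ • (g (p t) - g (q t) - A (p t - q t)))
      atTop (𝓝 0) := by
    rw [tendsto_zero_iff_norm_tendsto_zero]
    have h1 := herr.norm_norm.tendsto_div_nhds_zero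
    refine h1.congr fun t => ?_
    simp only [Function.comp_apply, norm_smul, norm_inv, norm_norm, div_eq_mul_inv]
    ring
  have hA : Tendsto (fun t => A (‖p t - q t‖⁻¹ • (p t - q t))) atTop (𝓝 (A v)) :=
    (A.continuous.tendsto v).comp hv
  have heq : (fun t => ‖p t - q t‖⁻¹ • (g (p t) - g (q t))) =
      fun t => ‖p t - q t‖⁻¹ • (g (p t) - g (q t) - A (p t - q t)) +
        A (‖p t - q t‖⁻¹ • (p t - q t)) := by
    funext t
    rw [map_smul, ← smul_add, sub_add_cancel]
  rw [heq]
  simpa using h0.add hA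

/-- Full conclusions: norm ratio and normalized direction of `g`-differences converge. -/
lemma flat_all {E F : Type*} [NormedAddCommGroup E] [NormedSpace ℝ E]
    [NormedAddCommGroup F] [NormedSpace ℝ F]
    {g : E → F} {A : E →L[ℝ] F} {a : E} (hg : HasStrictFDerivAt g A a)
    (hA : Function.Injective A)
    {p q : ℕ → E} (hp : Tendsto p atTop (𝓝 a)) (hq : Tendsto q atTop (𝓝 a))
    (hne : ∀ᶠ t in atTop, p t ≠ q t)
    {v : E} (hvnorm : ‖v‖ = 1)
    (hv : Tendsto (fun t => ‖p t - q t‖⁻¹ • (p t - q t)) atTop (𝓝 v)) :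
    Tendsto (fun t => ‖g (p t) - g (q t)‖ / ‖p t - q t‖) atTop (𝓝 ‖A v‖) ∧
    Tendsto (fun t => ‖g (p t) - g (q t)‖⁻¹ • (g (p t) - g (q t))) atTop
      (𝓝 (‖A v‖⁻¹ • A v)) ∧ A v ≠ 0 := by
  have hv0 : v ≠ 0 := by intro h0; rw [h0, norm_zero] at hvnorm; norm_num at hvnorm
  have hAv : A v ≠ 0 := fun h0 => hv0 (hA (by rw [h0, map_zero]))
  have hw := flat_dir_tendsto hg hp hq hv
  have hwn : Tendsto (fun t => ‖‖p t - q t‖⁻¹ • (g (p t) - g (q t))‖) atTop (𝓝 ‖A v‖) :=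
    (continuous_norm.tendsto _).comp hw
  constructor
  · refine hwn.congr' (hne.mono fun t ht => ?_)
    simp only [norm_smul, norm_inv, norm_norm, div_eq_mul_inv]
    ring
  constructor
  · have hcont : ContinuousAt (fun z : F => ‖z‖⁻¹ • z) (A v) := by
      exact (continuousAt_id.norm.inv₀ (norm_ne_zero_iff.mpr hAv)).smul continuousAt_id
    have h2 : Tendsto (fun t => ‖‖p t - q t‖⁻¹ • (g (p t) - g (q t))‖⁻¹ •
        (‖p t - q t‖⁻¹ • (g (p t) - g (q t)))) atTop (𝓝 (‖A v‖⁻¹ • A v)) :=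
      hcont.tendsto.comp hw
    refine h2.congr' (hne.mono fun t ht => ?_)
    have hd : ‖p t - q t‖ ≠ 0 := norm_ne_zero_iff.mpr (sub_ne_zero.mpr ht)
    rw [norm_smul, norm_inv, norm_norm, smul_smul, mul_inv, inv_inv]
    congr 1
    field_simp
  · exact hAv

/-- Reverse direction: if normalized `g`-differences converge, then normalized
differences in the source converge (finite-dimensional source). -/
lemma flat_reverse {n : ℕ} {F : Type*} [NormedAddCommGroup F] [NormedSpace ℝ F]
    {g : Eu n → F} {A : Eu n →L[ℝ] F} {a : Eu n} (hg : HasStrictFDerivAt g A a)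
    (hA : Function.Injective A)
    {p q : ℕ → Eu n} (hp : Tendsto p atTop (𝓝 a)) (hq : Tendsto q atTop (𝓝 a))
    (hne : ∀ᶠ t in atTop, p t ≠ q t)
    {u : F}
    (hu : Tendsto (fun t => ‖g (p t) - g (q t)‖⁻¹ • (g (p t) - g (q t))) atTop (𝓝 u)) :
    ∃ v : Eu n, ‖v‖ = 1 ∧ ‖A v‖⁻¹ • A v = u ∧
      Tendsto (fun t => ‖p t - q t‖⁻¹ • (p t - q t)) atTop (𝓝 v) := by
  set vs : ℕ → Eu n := fun t => ‖p t - q t‖⁻¹ • (p t - q t) with hvs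
  have key : ∀ ns : ℕ → ℕ, Tendsto ns atTop atTop →
      ∃ v : Eu n, ‖v‖ = 1 ∧ ‖A v‖⁻¹ • A v = u ∧
        ∃ ms : ℕ → ℕ, Tendsto (fun t => vs (ns (ms t))) atTop (𝓝 v) := by
    intro ns hns
    have hne' : ∀ᶠ s in atTop, p (ns s) ≠ q (ns s) := hns.eventually hne
    obtain ⟨T, hT⟩ := eventually_atTop.mp hne'
    have hmem : ∀ s : ℕ, vs (ns (s + T)) ∈ Metric.sphere (0 : Eu n) 1 := by
      intro s
      have hd : p (ns (s + T)) - q (ns (s + T)) ≠ 0 :=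
        sub_ne_zero.mpr (hT (s + T) (Nat.le_add_left T s))
      rw [mem_sphere_zero_iff_norm, hvs, norm_smul, norm_inv, norm_norm,
        inv_mul_cancel₀ (norm_ne_zero_iff.mpr hd)]
    obtain ⟨v, hvmem, φ, hφ, hvt⟩ :=
      (isCompact_sphere (0 : Eu n) 1).tendsto_subseq hmem
    have hidx : Tendsto (fun s => ns (φ s + T)) atTop atTop :=
      hns.comp ((tendsto_add_atTop_nat T).comp hφ.tendsto_atTop)
    have hp' : Tendsto (fun s => p (ns (φ s + T))) atTop (𝓝 a) := hp.comp hidx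
    have hq' : Tendsto (fun s => q (ns (φ s + T))) atTop (𝓝 a) := hq.comp hidx
    have hne'' : ∀ᶠ s in atTop, p (ns (φ s + T)) ≠ q (ns (φ s + T)) :=
      Eventually.of_forall fun s => hT _ (Nat.le_add_left T (φ s))
    have hvnorm : ‖v‖ = 1 := mem_sphere_zero_iff_norm.mp hvmem
    have hvt' : Tendsto (fun s => ‖p (ns (φ s + T)) - q (ns (φ s + T))‖⁻¹ •
        (p (ns (φ s + T)) - q (ns (φ s + T)))) atTop (𝓝 v) := hvt
    obtain ⟨-, hdir, -⟩ := flat_all hg hA hp' hq' hne'' hvnorm hvt'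
    have huniq : ‖A v‖⁻¹ • A v = u :=
      tendsto_nhds_unique hdir (hu.comp hidx)
    exact ⟨v, hvnorm, huniq, fun s => φ s + T, hvt'⟩
  obtain ⟨v, hv1, hv2, -⟩ := key id tendsto_id
  refine ⟨v, hv1, hv2, tendsto_of_subseq_tendsto fun ns hns => ?_⟩
  obtain ⟨v', hv1', hv2', ms, hms⟩ := key ns hns
  have : v' = v := norm_smul_self_inj A hA hv1' hv1 (hv2'.trans hv2.symm)
  exact ⟨ms, this ▸ hms⟩


/-- The manifold derivative of a map into a Euclidean space, as a continuous linear
map between Euclidean spaces. -/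
abbrev mfd (n : ℕ) {d : ℕ} {X : Type*} [TopologicalSpace X] [ChartedSpace (Eu n) X]
    (G : X → Eu d) (a : X) : Eu n →L[ℝ] Eu d :=
  mfderiv (𝓡 n) 𝓘(ℝ, Eu d) G a

/-- The chart representative of a smooth map to a vector space has a strict
Fréchet derivative equal to the manifold derivative. -/
lemma mfld_strict {n d : ℕ} {X : Type*} [TopologicalSpace X] [ChartedSpace (Eu n) X]
    {G : X → Eu d} {a : X} (hG : ContMDiffAt (𝓡 n) 𝓘(ℝ, Eu d) (⊤ : ℕ∞) G a) :
    HasStrictFDerivAt (fun z => G ((extChartAt (𝓡 n) a).symm z))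
      (mfd n G a) (extChartAt (𝓡 n) a a) := by
  have h1 := (contMDiffAt_iff.mp hG).2
  rw [ModelWithCorners.range_eq_univ, contDiffWithinAt_univ] at h1
  have h2 := h1.hasStrictFDerivAt (by simp)
  have h3 : mfd n G a = fderiv ℝ
      (↑(extChartAt 𝓘(ℝ, Eu d) (G a)) ∘ G ∘ ↑(extChartAt (𝓡 n) a).symm)
      (extChartAt (𝓡 n) a a) := by
    show mfderiv (𝓡 n) 𝓘(ℝ, Eu d) G a = _
    rw [(hG.mdifferentiableAt (by simp)).mfderiv, ModelWithCorners.range_eq_univ,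
      fderivWithin_univ]
    rfl
  rw [h3]
  exact h2

/-- Key manifold lemma: along two sequences collapsing to a point `a`, if the
normalized `G₁`-differences converge, then the normalized `G₂`-differences and the
ratio of norms of differences converge, with limits determined via the chart
direction by the limit of the normalized `G₁`-differences. -/
lemma mfld_pair {n d₁ d₂ : ℕ} {X : Type*} [TopologicalSpace X] [ChartedSpace (Eu n) X]
    {G₁ : X → Eu d₁} {G₂ : X → Eu d₂} {a : X}
    (h₁ : ContMDiffAt (𝓡 n) 𝓘(ℝ, Eu d₁) (⊤ : ℕ∞) G₁ a)
    (h₁m : Function.Injective (mfd n G₁ a))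
    (h₂ : ContMDiffAt (𝓡 n) 𝓘(ℝ, Eu d₂) (⊤ : ℕ∞) G₂ a)
    (h₂m : Function.Injective (mfd n G₂ a))
    {x y : ℕ → X} (hx : Tendsto x atTop (𝓝 a)) (hy : Tendsto y atTop (𝓝 a))
    (hne : ∀ t, x t ≠ y t)
    {u : Eu d₁}
    (hu : Tendsto (fun t => ‖G₁ (x t) - G₁ (y t)‖⁻¹ • (G₁ (x t) - G₁ (y t))) atTop (𝓝 u)) :
    ∃ v : Eu n, ‖v‖ = 1 ∧
      ‖mfd n G₁ a v‖⁻¹ • mfd n G₁ a v = u ∧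
      Tendsto (fun t => ‖G₂ (x t) - G₂ (y t)‖⁻¹ • (G₂ (x t) - G₂ (y t))) atTop
        (𝓝 (‖mfd n G₂ a v‖⁻¹ • mfd n G₂ a v)) ∧
      Tendsto (fun t => ‖G₂ (x t) - G₂ (y t)‖ / ‖G₁ (x t) - G₁ (y t)‖) atTop
        (𝓝 (‖mfd n G₂ a v‖ / ‖mfd n G₁ a v‖)) ∧
      mfd n G₁ a v ≠ 0 ∧ mfd n G₂ a v ≠ 0 := by
  set e := extChartAt (𝓡 n) a with he
  have hsource : e.source ∈ 𝓝 a := extChartAt_source_mem_nhds a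
  have hxe : ∀ᶠ t in atTop, x t ∈ e.source := hx.eventually_mem hsource
  have hye : ∀ᶠ t in atTop, y t ∈ e.source := hy.eventually_mem hsource
  set p : ℕ → Eu n := fun t => e (x t) with hpdef
  set q : ℕ → Eu n := fun t => e (y t) with hqdef
  have hp : Tendsto p atTop (𝓝 (e a)) := (continuousAt_extChartAt a).tendsto.comp hx
  have hq : Tendsto q atTop (𝓝 (e a)) := (continuousAt_extChartAt a).tendsto.comp hy
  have hxy : ∀ᶠ t in atTop, x t ∈ e.source ∧ y t ∈ e.source := hxe.and hye
  have hpq : ∀ᶠ t in atTop, p t ≠ q t := by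
    refine hxy.mono fun t ht h => hne t ?_
    exact e.injOn ht.1 ht.2 h
  have hG₁eq : ∀ᶠ t in atTop, G₁ (x t) = G₁ (e.symm (p t)) ∧ G₁ (y t) = G₁ (e.symm (q t)) ∧
      G₂ (x t) = G₂ (e.symm (p t)) ∧ G₂ (y t) = G₂ (e.symm (q t)) := by
    refine hxy.mono fun t ht => ?_
    rw [e.left_inv ht.1, e.left_inv ht.2]
    exact ⟨rfl, rfl, rfl, rfl⟩
  have hst₁ := mfld_strict h₁
  have hst₂ := mfld_strict h₂
  have hu' : Tendsto (fun t => ‖G₁ (e.symm (p t)) - G₁ (e.symm (q t))‖⁻¹ •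
      (G₁ (e.symm (p t)) - G₁ (e.symm (q t)))) atTop (𝓝 u) := by
    refine hu.congr' (hG₁eq.mono fun t ht => ?_)
    simp only [ht.1, ht.2.1]
  obtain ⟨v, hv1, hv2, hvt⟩ := flat_reverse hst₁ h₁m hp hq hpq hu'
  obtain ⟨hrat₂, hdir₂, hA₂v⟩ := flat_all hst₂ h₂m hp hq hpq hv1 hvt
  obtain ⟨hrat₁, -, hA₁v⟩ := flat_all hst₁ h₁m hp hq hpq hv1 hvt
  have hA₁vn : ‖mfd n G₁ a v‖ ≠ 0 := norm_ne_zero_iff.mpr hA₁v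
  refine ⟨v, hv1, hv2, ?_, ?_, hA₁v, hA₂v⟩
  · refine hdir₂.congr' (hG₁eq.mono fun t ht => ?_)
    simp only [ht.2.2.1, ht.2.2.2]
    rfl
  · have hdiv := hrat₂.div hrat₁ hA₁vn
    have hpos : (0:ℝ) < ‖mfd n G₁ a v‖ := norm_pos_iff.mpr hA₁v
    have hev : ∀ᶠ t in atTop, 0 < ‖G₁ (e.symm (p t)) - G₁ (e.symm (q t))‖ / ‖p t - q t‖ :=
      hrat₁.eventually (lt_mem_nhds hpos)
    refine hdiv.congr' ?_
    refine ((hG₁eq.and hpq).and hev).mono fun t ht => ?_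
    obtain ⟨⟨hteq, hptqt⟩, htpos⟩ := ht
    have hb : ‖p t - q t‖ ≠ 0 := norm_ne_zero_iff.mpr (sub_ne_zero.mpr hptqt)
    have hc : ‖G₁ (e.symm (p t)) - G₁ (e.symm (q t))‖ ≠ 0 := by
      intro h0
      rw [h0, zero_div] at htpos
      exact lt_irrefl 0 htpos
    show (‖G₂ (e.symm (p t)) - G₂ (e.symm (q t))‖ / ‖p t - q t‖) /
        (‖G₁ (e.symm (p t)) - G₁ (e.symm (q t))‖ / ‖p t - q t‖) =
        ‖G₂ (x t) - G₂ (y t)‖ / ‖G₁ (x t) - G₁ (y t)‖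
    rw [div_div_div_comm, div_self hb, div_one, hteq.1, hteq.2.1, hteq.2.2.1, hteq.2.2.2]

/-- Recovering convergence in a compact space from convergence of an injective
continuous image. -/
lemma pos_lemma {X Y : Type*} [TopologicalSpace X] [FirstCountableTopology X]
    [CompactSpace X] [TopologicalSpace Y] [T2Space Y]
    {G : X → Y} (hGc : Continuous G) (hGi : Function.Injective G)
    {x : ℕ → X} {c : Y} (h : Tendsto (fun t => G (x t)) atTop (𝓝 c)) :
    ∃ a : X, G a = c ∧ Tendsto x atTop (𝓝 a) := by
  obtain ⟨a, -, φ, hφ, ha⟩ := isCompact_univ.tendsto_subseq (x := x) fun n => Set.mem_univ _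
  have hGa : G a = c :=
    tendsto_nhds_unique ((hGc.tendsto a).comp ha) (h.comp hφ.tendsto_atTop)
  refine ⟨a, hGa, tendsto_of_subseq_tendsto fun ns hns => ?_⟩
  obtain ⟨a2, -, ψ, hψ, ha2⟩ :=
    isCompact_univ.tendsto_subseq (x := fun t => x (ns t)) fun n => Set.mem_univ _
  have ha2a : a2 = a := hGi ((tendsto_nhds_unique ((hGc.tendsto a2).comp ha2)
    ((h.comp hns).comp hψ.tendsto_atTop)).trans hGa.symm)
  exact ⟨ψ, ha2a ▸ ha2⟩


/-- Auxiliary target for configuration data of a map into `ℝ^d`. -/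
abbrev AuxT (d k : ℕ) : Type :=
  (Fin k → Eu d) × (ConfigPairs k → Eu d) × (ConfigTriples k → ℝ≥0∞)

/-- The `i`-th point of a configuration, as an element of `M`. -/
def cpt {m k : ℕ} {M : Set (Eu m)} (x : OrdConfig m M k) (i : Fin k) : ↥M :=
  ⟨x.1 i, x.2.1 i⟩

/-- The configuration data (positions, normalized differences, ratios) of the
`G`-image of a configuration. -/
def gaux {m k d : ℕ} {M : Set (Eu m)} (G : ↥M → Eu d) (x : OrdConfig m M k) :
    AuxT d k :=
  ⟨fun i => G (cpt x i),
   fun p => ‖G (cpt x p.1.1) - G (cpt x p.1.2)‖⁻¹ • (G (cpt x p.1.1) - G (cpt x p.1.2)),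
   fun r => ENNReal.ofReal
     (‖G (cpt x r.1.1) - G (cpt x r.1.2.1)‖ / ‖G (cpt x r.1.1) - G (cpt x r.1.2.2)‖)⟩

lemma tendsto_auxT_fst {d k : ℕ} {F : ℕ → AuxT d k} {b : AuxT d k}
    (h : Filter.Tendsto F Filter.atTop (𝓝 b)) (i : Fin k) :
    Filter.Tendsto (fun t => (F t).1 i) Filter.atTop (𝓝 (b.1 i)) :=
  (((continuous_apply i).comp continuous_fst).tendsto b).comp h

lemma tendsto_auxT_pair {d k : ℕ} {F : ℕ → AuxT d k} {b : AuxT d k}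
    (h : Filter.Tendsto F Filter.atTop (𝓝 b)) (p : ConfigPairs k) :
    Filter.Tendsto (fun t => (F t).2.1 p) Filter.atTop (𝓝 (b.2.1 p)) :=
  (((continuous_apply p).comp (continuous_fst.comp continuous_snd)).tendsto b).comp h

lemma tendsto_auxT_trip {d k : ℕ} {F : ℕ → AuxT d k} {b : AuxT d k}
    (h : Filter.Tendsto F Filter.atTop (𝓝 b)) (r : ConfigTriples k) :
    Filter.Tendsto (fun t => (F t).2.2 r) Filter.atTop (𝓝 (b.2.2 r)) :=
  (((continuous_apply r).comp (continuous_snd.comp continuous_snd)).tendsto b).comp h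

lemma cpt_ne {m k : ℕ} {M : Set (Eu m)} (x : OrdConfig m M k) {i j : Fin k}
    (hij : i ≠ j) : cpt x i ≠ cpt x j :=
  fun h => hij (x.2.2 (congrArg Subtype.val h))

/-- Core determinacy lemma: the limit of the `G₂`-configuration data is determined by
the limit of the `G₁`-configuration data. -/
lemma core {m n k d₁ d₂ : ℕ} {M : Set (Eu m)} (hM : IsCompact M)
    [ChartedSpace (Eu n) ↥M]
    {G₁ : ↥M → Eu d₁} {G₂ : ↥M → Eu d₂}
    (h₁s : ContMDiff (𝓡 n) 𝓘(ℝ, Eu d₁) (⊤ : ℕ∞) G₁) (h₁i : Function.Injective G₁)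
    (h₁m : ∀ x : ↥M, Function.Injective (mfd n G₁ x))
    (h₂s : ContMDiff (𝓡 n) 𝓘(ℝ, Eu d₂) (⊤ : ℕ∞) G₂) (h₂i : Function.Injective G₂)
    (h₂m : ∀ x : ↥M, Function.Injective (mfd n G₂ x))
    {xs ys : ℕ → OrdConfig m M k} {b : AuxT d₁ k} {c c2 : AuxT d₂ k}
    (hxb : Tendsto (fun t => gaux G₁ (xs t)) atTop (𝓝 b))
    (hyb : Tendsto (fun t => gaux G₁ (ys t)) atTop (𝓝 b))
    (hxc : Tendsto (fun t => gaux G₂ (xs t)) atTop (𝓝 c))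
    (hyc : Tendsto (fun t => gaux G₂ (ys t)) atTop (𝓝 c2)) : c = c2 := by
  haveI : CompactSpace ↥M := isCompact_iff_compactSpace.mp hM
  have hpos : ∀ i : Fin k, ∃ a : ↥M, G₁ a = b.1 i ∧
      Tendsto (fun t => cpt (xs t) i) atTop (𝓝 a) ∧
      Tendsto (fun t => cpt (ys t) i) atTop (𝓝 a) := by
    intro i
    obtain ⟨a, ha1, ha2⟩ := pos_lemma h₁s.continuous h₁i
      (x := fun t => cpt (xs t) i) (tendsto_auxT_fst hxb i)
    obtain ⟨a', ha1', ha2'⟩ := pos_lemma h₁s.continuous h₁i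
      (x := fun t => cpt (ys t) i) (tendsto_auxT_fst hyb i)
    exact ⟨a, ha1, ha2, (h₁i (ha1'.trans ha1.symm)) ▸ ha2'⟩
  choose a hab hax hay using hpos
  -- the key pairwise limits
  have hpair : ∀ (i j : Fin k), i ≠ j → ∃ (w : Eu d₂) (ρ : ℝ), 0 < ρ ∧
      Tendsto (fun t => ‖G₂ (cpt (xs t) i) - G₂ (cpt (xs t) j)‖⁻¹ •
        (G₂ (cpt (xs t) i) - G₂ (cpt (xs t) j))) atTop (𝓝 w) ∧
      Tendsto (fun t => ‖G₂ (cpt (ys t) i) - G₂ (cpt (ys t) j)‖⁻¹ •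
        (G₂ (cpt (ys t) i) - G₂ (cpt (ys t) j))) atTop (𝓝 w) ∧
      Tendsto (fun t => ‖G₂ (cpt (xs t) i) - G₂ (cpt (xs t) j)‖ /
        ‖G₁ (cpt (xs t) i) - G₁ (cpt (xs t) j)‖) atTop (𝓝 ρ) ∧
      Tendsto (fun t => ‖G₂ (cpt (ys t) i) - G₂ (cpt (ys t) j)‖ /
        ‖G₁ (cpt (ys t) i) - G₁ (cpt (ys t) j)‖) atTop (𝓝 ρ) := by
    intro i j hij
    by_cases haij : a i = a j
    · -- collision: use the manifold lemma
      have hyj : Tendsto (fun t => cpt (xs t) j) atTop (𝓝 (a i)) := by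
        rw [haij]; exact hax j
      have hyj' : Tendsto (fun t => cpt (ys t) j) atTop (𝓝 (a i)) := by
        rw [haij]; exact hay j
      obtain ⟨v, hv1, hv2, hdir, hrat, hA1v, hA2v⟩ :=
        mfld_pair (h₁s.contMDiffAt) (h₁m (a i)) (h₂s.contMDiffAt) (h₂m (a i))
          (x := fun t => cpt (xs t) i) (y := fun t => cpt (xs t) j)
          (hax i) hyj (fun t => cpt_ne (xs t) hij)
          (tendsto_auxT_pair hxb ⟨(i,j), hij⟩)
      obtain ⟨v', hv1', hv2', hdir', hrat', -, -⟩ :=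
        mfld_pair (h₁s.contMDiffAt) (h₁m (a i)) (h₂s.contMDiffAt) (h₂m (a i))
          (x := fun t => cpt (ys t) i) (y := fun t => cpt (ys t) j)
          (hay i) hyj' (fun t => cpt_ne (ys t) hij)
          (tendsto_auxT_pair hyb ⟨(i,j), hij⟩)
      have hvv : v' = v := norm_smul_self_inj _ (h₁m (a i)) hv1' hv1 (hv2'.trans hv2.symm)
      rw [hvv] at hdir' hrat'
      exact ⟨_, _, div_pos (norm_pos_iff.mpr hA2v) (norm_pos_iff.mpr hA1v),
        hdir, hdir', hrat, hrat'⟩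
    · -- separated points: continuity
      have hG2ne : G₂ (a i) - G₂ (a j) ≠ 0 := sub_ne_zero.mpr fun h => haij (h₂i h)
      have hG1ne : G₁ (a i) - G₁ (a j) ≠ 0 := sub_ne_zero.mpr fun h => haij (h₁i h)
      have hcont2 : ContinuousAt (fun z : Eu d₂ => ‖z‖⁻¹ • z) (G₂ (a i) - G₂ (a j)) :=
        (continuousAt_id.norm.inv₀ (norm_ne_zero_iff.mpr hG2ne)).smul continuousAt_id
      have hdx : Tendsto (fun t => G₂ (cpt (xs t) i) - G₂ (cpt (xs t) j)) atTop
          (𝓝 (G₂ (a i) - G₂ (a j))) :=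
        ((h₂s.continuous.tendsto _).comp (hax i)).sub ((h₂s.continuous.tendsto _).comp (hax j))
      have hdy : Tendsto (fun t => G₂ (cpt (ys t) i) - G₂ (cpt (ys t) j)) atTop
          (𝓝 (G₂ (a i) - G₂ (a j))) :=
        ((h₂s.continuous.tendsto _).comp (hay i)).sub ((h₂s.continuous.tendsto _).comp (hay j))
      have hd1x : Tendsto (fun t => G₁ (cpt (xs t) i) - G₁ (cpt (xs t) j)) atTop
          (𝓝 (G₁ (a i) - G₁ (a j))) :=
        ((h₁s.continuous.tendsto _).comp (hax i)).sub ((h₁s.continuous.tendsto _).comp (hax j))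
      have hd1y : Tendsto (fun t => G₁ (cpt (ys t) i) - G₁ (cpt (ys t) j)) atTop
          (𝓝 (G₁ (a i) - G₁ (a j))) :=
        ((h₁s.continuous.tendsto _).comp (hay i)).sub ((h₁s.continuous.tendsto _).comp (hay j))
      refine ⟨‖G₂ (a i) - G₂ (a j)‖⁻¹ • (G₂ (a i) - G₂ (a j)),
        ‖G₂ (a i) - G₂ (a j)‖ / ‖G₁ (a i) - G₁ (a j)‖,
        div_pos (norm_pos_iff.mpr hG2ne) (norm_pos_iff.mpr hG1ne),
        hcont2.tendsto.comp hdx, hcont2.tendsto.comp hdy, ?_, ?_⟩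
      · exact ((continuous_norm.tendsto _).comp hdx).div
          ((continuous_norm.tendsto _).comp hd1x) (norm_ne_zero_iff.mpr hG1ne)
      · exact ((continuous_norm.tendsto _).comp hdy).div
          ((continuous_norm.tendsto _).comp hd1y) (norm_ne_zero_iff.mpr hG1ne)
  -- assemble the equality of the limits
  have hGd : ∀ (z : OrdConfig m M k) (i j : Fin k), i ≠ j →
      ‖G₁ (cpt z i) - G₁ (cpt z j)‖ ≠ 0 := by
    intro z i j hij
    exact norm_ne_zero_iff.mpr (sub_ne_zero.mpr fun h => cpt_ne z hij (h₁i h))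
  have hG2d : ∀ (z : OrdConfig m M k) (i j : Fin k), i ≠ j →
      ‖G₂ (cpt z i) - G₂ (cpt z j)‖ ≠ 0 := by
    intro z i j hij
    exact norm_ne_zero_iff.mpr (sub_ne_zero.mpr fun h => cpt_ne z hij (h₂i h))
  have hfst : c.1 = c2.1 := by
    funext i
    have h1 : Tendsto (fun t => G₂ (cpt (xs t) i)) atTop (𝓝 (G₂ (a i))) :=
      (h₂s.continuous.tendsto _).comp (hax i)
    have h2 : Tendsto (fun t => G₂ (cpt (ys t) i)) atTop (𝓝 (G₂ (a i))) :=
      (h₂s.continuous.tendsto _).comp (hay i)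
    exact (tendsto_nhds_unique (tendsto_auxT_fst hxc i) h1).trans
      (tendsto_nhds_unique h2 (tendsto_auxT_fst hyc i))
  have hsnd : c.2.1 = c2.2.1 := by
    funext p
    obtain ⟨w, ρ, -, hdx, hdy, -, -⟩ := hpair p.1.1 p.1.2 p.2
    exact (tendsto_nhds_unique (tendsto_auxT_pair hxc p) hdx).trans
      (tendsto_nhds_unique hdy (tendsto_auxT_pair hyc p))
  have htrd : c.2.2 = c2.2.2 := by
    funext r
    obtain ⟨w1, ρ1, hρ1, -, -, hrx1, hry1⟩ := hpair r.1.1 r.1.2.1 r.2.1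
    obtain ⟨w2, ρ2, hρ2, -, -, hrx2, hry2⟩ := hpair r.1.1 r.1.2.2 r.2.2.1
    have key : ∀ (zs : ℕ → OrdConfig m M k),
        Tendsto (fun t => (gaux G₁ (zs t)).2.2 r) atTop (𝓝 (b.2.2 r)) →
        Tendsto (fun t => ‖G₂ (cpt (zs t) r.1.1) - G₂ (cpt (zs t) r.1.2.1)‖ /
          ‖G₁ (cpt (zs t) r.1.1) - G₁ (cpt (zs t) r.1.2.1)‖) atTop (𝓝 ρ1) →
        Tendsto (fun t => ‖G₂ (cpt (zs t) r.1.1) - G₂ (cpt (zs t) r.1.2.2)‖ /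
          ‖G₁ (cpt (zs t) r.1.1) - G₁ (cpt (zs t) r.1.2.2)‖) atTop (𝓝 ρ2) →
        Tendsto (fun t => (gaux G₂ (zs t)).2.2 r) atTop
          (𝓝 (ENNReal.ofReal (ρ1 / ρ2) * b.2.2 r)) := by
      intro zs hzb hz1 hz2
      have hofr : Tendsto (fun t =>
          ENNReal.ofReal ((‖G₂ (cpt (zs t) r.1.1) - G₂ (cpt (zs t) r.1.2.1)‖ /
            ‖G₁ (cpt (zs t) r.1.1) - G₁ (cpt (zs t) r.1.2.1)‖) /
          (‖G₂ (cpt (zs t) r.1.1) - G₂ (cpt (zs t) r.1.2.2)‖ /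
            ‖G₁ (cpt (zs t) r.1.1) - G₁ (cpt (zs t) r.1.2.2)‖)))
          atTop (𝓝 (ENNReal.ofReal (ρ1 / ρ2))) :=
        (ENNReal.continuous_ofReal.tendsto _).comp (hz1.div hz2 hρ2.ne')
      have hmul := ENNReal.Tendsto.mul hofr
        (Or.inl (ENNReal.ofReal_pos.mpr (div_pos hρ1 hρ2)).ne') hzb
        (Or.inr ENNReal.ofReal_ne_top)
      refine hmul.congr fun t => ?_
      show ENNReal.ofReal _ * ENNReal.ofReal _ = ENNReal.ofReal _
      rw [← ENNReal.ofReal_mul (by positivity)]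
      congr 1
      have e1 := hGd (zs t) r.1.1 r.1.2.1 r.2.1
      have e2 := hGd (zs t) r.1.1 r.1.2.2 r.2.2.1
      have e3 := hG2d (zs t) r.1.1 r.1.2.2 r.2.2.1
      field_simp
    exact (tendsto_nhds_unique (tendsto_auxT_trip hxc r) (key xs (tendsto_auxT_trip hxb r) hrx1 hrx2)).trans
      (tendsto_nhds_unique (key ys (tendsto_auxT_trip hyb r) hry1 hry2) (tendsto_auxT_trip hyc r))
  exact Prod.ext hfst (Prod.ext hsnd htrd)

/-- Let `k ≥ 1`, let `M ⊆ ℝ^m` and `N ⊆ ℝ^{m'}` be compact smooth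
submanifolds without boundary, and let `f : M → N` be a smooth embedding (smooth,
a topological embedding, and an immersion).  The `k`-fold product `f^{×k}` restricts
to a continuous map `C̃_k(M) → C̃_k(N)`, and there exists a unique continuous map
`f̄_k : C̄_k(M) → C̄_k(N)` such that `f̄_k ∘ α_k^M = α_k^N ∘ f^{×k}`; moreover any
such `f̄_k` is a topological embedding. -/
theorem fm_functoriality (m m' n n' k : ℕ) (hk : 1 ≤ k)
    (M : Set (EuclideanSpace ℝ (Fin m))) (N : Set (EuclideanSpace ℝ (Fin m')))
    (hM : IsCompact M) (hN : IsCompact N)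
    [ChartedSpace (EuclideanSpace ℝ (Fin n)) ↥M]
    [IsManifold (𝓡 n) (⊤ : ℕ∞) ↥M]
    [ChartedSpace (EuclideanSpace ℝ (Fin n')) ↥N]
    [IsManifold (𝓡 n') (⊤ : ℕ∞) ↥N]
    (hinclM : ContMDiff (𝓡 n) 𝓘(ℝ, EuclideanSpace ℝ (Fin m)) (⊤ : ℕ∞)
      (fun x : ↥M => (x : EuclideanSpace ℝ (Fin m))))
    (himmM : ∀ x : ↥M, Function.Injective
      (mfderiv (𝓡 n) 𝓘(ℝ, EuclideanSpace ℝ (Fin m))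
        (fun x : ↥M => (x : EuclideanSpace ℝ (Fin m))) x))
    (hinclN : ContMDiff (𝓡 n') 𝓘(ℝ, EuclideanSpace ℝ (Fin m')) (⊤ : ℕ∞)
      (fun x : ↥N => (x : EuclideanSpace ℝ (Fin m'))))
    (himmN : ∀ x : ↥N, Function.Injective
      (mfderiv (𝓡 n') 𝓘(ℝ, EuclideanSpace ℝ (Fin m'))
        (fun x : ↥N => (x : EuclideanSpace ℝ (Fin m'))) x))
    (f : ↥M → ↥N) (hfsmooth : ContMDiff (𝓡 n) (𝓡 n') (⊤ : ℕ∞) f)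
    (hfemb : IsEmbedding f)
    (hfimm : ∀ x : ↥M, Function.Injective (mfderiv (𝓡 n) (𝓡 n') f x)) :
    Continuous (mapConfig f hfemb.injective k) ∧
    (∃! fbar : FMSpace m M k → FMSpace m' N k,
      Continuous fbar ∧
        ∀ x : OrdConfig m M k,
          fbar (fmCorestrict m M k x) =
            fmCorestrict m' N k (mapConfig f hfemb.injective k x)) ∧
    (∀ fbar : FMSpace m M k → FMSpace m' N k,
      (Continuous fbar ∧
        ∀ x : OrdConfig m M k,
          fbar (fmCorestrict m M k x) =
            fmCorestrict m' N k (mapConfig f hfemb.injective k x)) →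
      IsEmbedding fbar) := by
  classical
  haveI hMc : CompactSpace ↥M := isCompact_iff_compactSpace.mp hM
  haveI hNc : CompactSpace ↥N := isCompact_iff_compactSpace.mp hN
  haveI i1 : T2Space ((ConfigPairs k → Metric.sphere (0 : EuclideanSpace ℝ (Fin m)) 1) ×
      (ConfigTriples k → ℝ≥0∞)) := inferInstance
  haveI i2 : T2Space (FMTarget m M k) := inferInstance
  haveI i3 : T2Space ((ConfigPairs k → Metric.sphere (0 : EuclideanSpace ℝ (Fin m')) 1) ×
      (ConfigTriples k → ℝ≥0∞)) := inferInstance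
  haveI i4 : T2Space (FMTarget m' N k) := inferInstance
  haveI i5 : T2Space (FMTarget m M k × FMTarget m' N k) := inferInstance
  haveI c1 : CompactSpace ((ConfigPairs k → Metric.sphere (0 : EuclideanSpace ℝ (Fin m)) 1) ×
      (ConfigTriples k → ℝ≥0∞)) := inferInstance
  haveI c2 : CompactSpace (FMTarget m M k) := inferInstance
  haveI c3 : CompactSpace ((ConfigPairs k → Metric.sphere (0 : EuclideanSpace ℝ (Fin m')) 1) ×
      (ConfigTriples k → ℝ≥0∞)) := inferInstance
  haveI c4 : CompactSpace (FMTarget m' N k) := inferInstance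
  haveI c5 : CompactSpace (FMTarget m M k × FMTarget m' N k) := inferInstance
  haveI f1 : FirstCountableTopology ((ConfigPairs k → Metric.sphere (0 : EuclideanSpace ℝ (Fin m)) 1) ×
      (ConfigTriples k → ℝ≥0∞)) := inferInstance
  haveI f2 : FirstCountableTopology (FMTarget m M k) := inferInstance
  haveI f3 : FirstCountableTopology ((ConfigPairs k → Metric.sphere (0 : EuclideanSpace ℝ (Fin m')) 1) ×
      (ConfigTriples k → ℝ≥0∞)) := inferInstance
  haveI f4 : FirstCountableTopology (FMTarget m' N k) := inferInstance
  haveI f5 : FirstCountableTopology (FMTarget m M k × FMTarget m' N k) := inferInstance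
  haveI u1 : FrechetUrysohnSpace (FMTarget m M k) := inferInstance
  haveI u2 : FrechetUrysohnSpace (FMTarget m M k × FMTarget m' N k) := inferInstance
  set mc := mapConfig f hfemb.injective k with hmc_def
  have hmc : Continuous mc := by
    apply Continuous.subtype_mk
    apply continuous_pi
    intro i
    exact continuous_subtype_val.comp (hfemb.continuous.comp
      (Continuous.subtype_mk ((continuous_apply i).comp continuous_subtype_val) _))
  set Gincl : ↥M → Eu m := fun x => (x : EuclideanSpace ℝ (Fin m)) with hGincl
  set GF : ↥M → Eu m' := fun x => ((f x : ↥N) : EuclideanSpace ℝ (Fin m')) with hGF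
  have hGis : ContMDiff (𝓡 n) 𝓘(ℝ, Eu m) (⊤ : ℕ∞) Gincl := hinclM
  have hGii : Function.Injective Gincl := fun x y h => Subtype.ext h
  have hGim : ∀ x, Function.Injective (mfd n Gincl x) := himmM
  have hGFs : ContMDiff (𝓡 n) 𝓘(ℝ, Eu m') (⊤ : ℕ∞) GF := hinclN.comp hfsmooth
  have hGFi : Function.Injective GF := fun x y h => hfemb.injective (Subtype.ext h)
  have hGFm : ∀ x, Function.Injective (mfd n GF x) := by
    intro x
    have h1 : MDifferentiableAt (𝓡 n') 𝓘(ℝ, Eu m') (fun y : ↥N => (y : Eu m')) (f x) :=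
      hinclN.mdifferentiableAt (by simp)
    have h2 : MDifferentiableAt (𝓡 n) (𝓡 n') f x := hfsmooth.mdifferentiableAt (by simp)
    have h3 : mfd n GF x = (mfderiv (𝓡 n') 𝓘(ℝ, Eu m') (fun y : ↥N => (y : Eu m')) (f x)).comp
        (mfderiv (𝓡 n) (𝓡 n') f x) := mfderiv_comp x h1 h2
    intro v w hvw
    rw [h3] at hvw
    exact hfimm x (himmN (f x) hvw)
  -- conversions to the auxiliary target
  set toA : FMTarget m M k → AuxT m k :=
    fun y => (fun i => (y.1 i : Eu m), fun p => (y.2.1 p : Eu m), y.2.2) with htoA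
  set toA' : FMTarget m' N k → AuxT m' k :=
    fun y => (fun i => (y.1 i : Eu m'), fun p => (y.2.1 p : Eu m'), y.2.2) with htoA'
  have htoAc : Continuous toA := by
    refine Continuous.prodMk ?_ (Continuous.prodMk ?_ ?_)
    · exact continuous_pi fun i =>
        continuous_subtype_val.comp ((continuous_apply i).comp continuous_fst)
    · exact continuous_pi fun p =>
        continuous_subtype_val.comp ((continuous_apply p).comp (continuous_fst.comp continuous_snd))
    · exact continuous_snd.comp continuous_snd
  have htoA'c : Continuous toA' := by
    refine Continuous.prodMk ?_ (Continuous.prodMk ?_ ?_)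
    · exact continuous_pi fun i =>
        continuous_subtype_val.comp ((continuous_apply i).comp continuous_fst)
    · exact continuous_pi fun p =>
        continuous_subtype_val.comp ((continuous_apply p).comp (continuous_fst.comp continuous_snd))
    · exact continuous_snd.comp continuous_snd
  have htoAi : Function.Injective toA := by
    intro y z h
    refine Prod.ext ?_ (Prod.ext ?_ ?_)
    · funext i; exact Subtype.ext (congrFun (congrArg Prod.fst h) i)
    · funext p; exact Subtype.ext (congrFun (congrArg (fun w => w.2.1) h) p)
    · exact congrArg (fun w => w.2.2) h
  have htoA'i : Function.Injective toA' := by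
    intro y z h
    refine Prod.ext ?_ (Prod.ext ?_ ?_)
    · funext i; exact Subtype.ext (congrFun (congrArg Prod.fst h) i)
    · funext p; exact Subtype.ext (congrFun (congrArg (fun w => w.2.1) h) p)
    · exact congrArg (fun w => w.2.2) h
  have hcompA : ∀ x : OrdConfig m M k, toA (fmMap m M k x) = gaux Gincl x := fun x => rfl
  have hcompA' : ∀ x : OrdConfig m M k, toA' (fmMap m' N k (mc x)) = gaux GF x := fun x => rfl
  -- determinacy lemmas
  have DETf : ∀ (xs ys : ℕ → OrdConfig m M k) (b : FMTarget m M k) (c c2 : FMTarget m' N k),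
      Tendsto (fun t => fmMap m M k (xs t)) atTop (𝓝 b) →
      Tendsto (fun t => fmMap m M k (ys t)) atTop (𝓝 b) →
      Tendsto (fun t => fmMap m' N k (mc (xs t))) atTop (𝓝 c) →
      Tendsto (fun t => fmMap m' N k (mc (ys t))) atTop (𝓝 c2) → c = c2 := by
    intro xs ys b c c2 h1 h2 h3 h4
    refine htoA'i (core hM hGis hGii hGim hGFs hGFi hGFm (b := toA b)
      (Tendsto.congr (fun t => hcompA (xs t)) ((htoAc.tendsto b).comp h1))
      (Tendsto.congr (fun t => hcompA (ys t)) ((htoAc.tendsto b).comp h2))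
      (Tendsto.congr (fun t => hcompA' (xs t)) ((htoA'c.tendsto c).comp h3))
      (Tendsto.congr (fun t => hcompA' (ys t)) ((htoA'c.tendsto c2).comp h4)))
  have DETb : ∀ (xs ys : ℕ → OrdConfig m M k) (c : FMTarget m' N k) (b b2 : FMTarget m M k),
      Tendsto (fun t => fmMap m' N k (mc (xs t))) atTop (𝓝 c) →
      Tendsto (fun t => fmMap m' N k (mc (ys t))) atTop (𝓝 c) →
      Tendsto (fun t => fmMap m M k (xs t)) atTop (𝓝 b) →
      Tendsto (fun t => fmMap m M k (ys t)) atTop (𝓝 b2) → b = b2 := by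
    intro xs ys c b b2 h1 h2 h3 h4
    refine htoAi (core hM hGFs hGFi hGFm hGis hGii hGim (b := toA' c)
      (Tendsto.congr (fun t => hcompA' (xs t)) ((htoA'c.tendsto c).comp h1))
      (Tendsto.congr (fun t => hcompA' (ys t)) ((htoA'c.tendsto c).comp h2))
      (Tendsto.congr (fun t => hcompA (xs t)) ((htoAc.tendsto b).comp h3))
      (Tendsto.congr (fun t => hcompA (ys t)) ((htoAc.tendsto b2).comp h4)))
  -- the closed graph
  set β : OrdConfig m M k → FMTarget m M k × FMTarget m' N k :=
    fun x => (fmMap m M k x, fmMap m' N k (mc x)) with hβ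
  set Z := closure (Set.range β) with hZ
  haveI : CompactSpace ↥Z := isCompact_iff_compactSpace.mp isClosed_closure.isCompact
  have hmem1 : ∀ γ : ↥Z, γ.1.1 ∈ closure (Set.range (fmMap m M k)) := by
    intro γ
    have h1 : γ.1.1 ∈ Prod.fst '' closure (Set.range β) := ⟨γ.1, γ.2, rfl⟩
    have h2 := (image_closure_subset_closure_image continuous_fst) h1
    rw [← Set.range_comp] at h2
    exact h2
  have hmem2 : ∀ γ : ↥Z, γ.1.2 ∈ closure (Set.range (fmMap m' N k)) := by
    intro γ
    have h1 : γ.1.2 ∈ Prod.snd '' closure (Set.range β) := ⟨γ.1, γ.2, rfl⟩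
    have h2 := (image_closure_subset_closure_image continuous_snd) h1
    rw [← Set.range_comp] at h2
    exact closure_mono (Set.range_comp_subset_range mc (fmMap m' N k)) h2
  set p1 : ↥Z → FMSpace m M k := fun γ => ⟨γ.1.1, hmem1 γ⟩ with hp1
  set p2 : ↥Z → FMSpace m' N k := fun γ => ⟨γ.1.2, hmem2 γ⟩ with hp2
  have hp1c : Continuous p1 :=
    Continuous.subtype_mk (continuous_fst.comp continuous_subtype_val) _
  have hp2c : Continuous p2 :=
    Continuous.subtype_mk (continuous_snd.comp continuous_subtype_val) _
  have hseq : ∀ γ : ↥Z, ∃ xs : ℕ → OrdConfig m M k,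
      Tendsto (fun t => fmMap m M k (xs t)) atTop (𝓝 γ.1.1) ∧
      Tendsto (fun t => fmMap m' N k (mc (xs t))) atTop (𝓝 γ.1.2) := by
    intro γ
    obtain ⟨s, hs, hst⟩ := mem_closure_iff_seq_limit.mp γ.2
    choose xs hxs using hs
    have h1 : Tendsto (fun t => β (xs t)) atTop (𝓝 γ.1) := hst.congr fun t => (hxs t).symm
    exact ⟨xs, (continuous_fst.tendsto _).comp h1, (continuous_snd.tendsto _).comp h1⟩
  have hp1i : Function.Injective p1 := by
    intro γ γ' h
    obtain ⟨xs, hx1, hx2⟩ := hseq γ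
    obtain ⟨ys, hy1, hy2⟩ := hseq γ'
    have hb : γ.1.1 = γ'.1.1 := congrArg Subtype.val h
    rw [hb] at hx1
    exact Subtype.ext (Prod.ext hb (DETf xs ys γ'.1.1 γ.1.2 γ'.1.2 hx1 hy1 hx2 hy2))
  have hp2i : Function.Injective p2 := by
    intro γ γ' h
    obtain ⟨xs, hx1, hx2⟩ := hseq γ
    obtain ⟨ys, hy1, hy2⟩ := hseq γ'
    have hc : γ.1.2 = γ'.1.2 := congrArg Subtype.val h
    rw [hc] at hx2
    exact Subtype.ext (Prod.ext (DETb xs ys γ'.1.2 γ.1.1 γ'.1.1 hx2 hy2 hx1 hy1) hc)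
  have hp1s : Function.Surjective p1 := by
    intro z
    obtain ⟨s, hs, hst⟩ := mem_closure_iff_seq_limit.mp z.2
    choose xs hxs using hs
    have h1 : Tendsto (fun t => fmMap m M k (xs t)) atTop (𝓝 z.1) :=
      hst.congr fun t => (hxs t).symm
    obtain ⟨c, -, φ, hφ, hc⟩ := isCompact_univ.tendsto_subseq
      (x := fun t => fmMap m' N k (mc (xs t))) fun t => Set.mem_univ _
    have hβt : Tendsto (fun t => β (xs (φ t))) atTop (𝓝 (z.1, c)) :=
      (h1.comp hφ.tendsto_atTop).prodMk_nhds hc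
    have hzc : (z.1, c) ∈ Z :=
      mem_closure_of_tendsto hβt (Eventually.of_forall fun t => Set.mem_range_self _)
    exact ⟨⟨(z.1, c), hzc⟩, Subtype.ext rfl⟩
  let eqv : ↥Z ≃ FMSpace m M k := Equiv.ofBijective p1 ⟨hp1i, hp1s⟩
  let homeo : ↥Z ≃ₜ FMSpace m M k := Continuous.homeoOfEquivCompactToT2 (f := eqv) hp1c
  set fbar : FMSpace m M k → FMSpace m' N k := fun z => p2 (homeo.symm z) with hfbar
  have hfbarc : Continuous fbar := hp2c.comp homeo.symm.continuous
  have hγx : ∀ x : OrdConfig m M k,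
      homeo.symm (fmCorestrict m M k x) = ⟨β x, subset_closure (Set.mem_range_self x)⟩ := by
    intro x
    have h1 : homeo ⟨β x, subset_closure (Set.mem_range_self x)⟩ = fmCorestrict m M k x :=
      Subtype.ext rfl
    rw [← h1, Homeomorph.symm_apply_apply]
  have hcomm : ∀ x, fbar (fmCorestrict m M k x) = fmCorestrict m' N k (mc x) := by
    intro x
    show p2 (homeo.symm (fmCorestrict m M k x)) = _
    rw [hγx x]
    exact Subtype.ext rfl
  have hdr : DenseRange (fmCorestrict m M k) := by
    intro z
    obtain ⟨s, hs, hst⟩ := mem_closure_iff_seq_limit.mp z.2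
    choose xs hxs using hs
    have h1 : Tendsto (fun t => fmMap m M k (xs t)) atTop (𝓝 z.1) :=
      hst.congr fun t => (hxs t).symm
    have h2 : Tendsto (fun t => fmCorestrict m M k (xs t)) atTop (𝓝 z) := by
      rw [IsInducing.subtypeVal.tendsto_nhds_iff]
      exact h1
    exact mem_closure_of_tendsto h2 (Eventually.of_forall fun t => Set.mem_range_self _)
  haveI : CompactSpace (FMSpace m M k) :=
    isCompact_iff_compactSpace.mp isClosed_closure.isCompact
  refine ⟨hmc, ⟨fbar, ⟨hfbarc, hcomm⟩, ?_⟩, ?_⟩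
  · rintro g ⟨hgc, hgcomm⟩
    exact hdr.equalizer hgc hfbarc (funext fun x => (hgcomm x).trans (hcomm x).symm)
  · rintro g ⟨hgc, hgcomm⟩
    have hg : g = fbar :=
      hdr.equalizer hgc hfbarc (funext fun x => (hgcomm x).trans (hcomm x).symm)
    have hfbari : Function.Injective fbar := by
      intro z z' h
      exact homeo.symm.injective (hp2i h)
    rw [hg]
    exact (hfbarc.isClosedEmbedding hfbari).isEmbedding


end
end

section
/- Let M be a topological manifold of dimension ≥ 1 without boundary (Hausdorff and second countable), let (Z, *) be a pointed topological space, and let k ≥ 1. Let C(M;Z) denote the configuration space of M with labels in Z, and let C^{≤j}(M;Z) ⊆ C(M;Z) denote the image of the strata with at most j points, with the quotient topology. Then the canonical map C̃_k(M) × Z^k → C^{≤k}(M;Z)/C^{≤k−1}(M;Z), sending (m_1,…,m_k; z_1,…,z_k) to the class of the corresponding labelled configuration, descends to a homeomorphism of pointed spaces C̃_k(M)_+ ∧_{Σ_k} Z^{∧k} ≅ C^{≤k}(M;Z)/C^{≤k−1}(M;Z). -/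
open Topology

noncomputable section

/-- The space of "pre-configurations" in `M` with labels in `Z`: the disjoint union
over `k ≥ 0` of the spaces of `k`-tuples of labelled points whose underlying points
are pairwise distinct.  The space `C̃_k(M) × Z^k` is realized as the subspace of
`(M × Z)^k` of tuples with pairwise distinct first coordinates. -/
abbrev PreConfig (M Z : Type*) : Type _ :=
  Σ k : ℕ, {f : Fin k → M × Z // Function.Injective fun i => (f i).1}

/-- The "core" of a pre-configuration: the set of its labelled points whose label
differs from the basepoint `z₀`.  Two pre-configurations represent the same
labelled configuration exactly when they have the same core. -/
def configCore {M Z : Type*} (z₀ : Z) (x : PreConfig M Z) : Set (M × Z) :=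
  {p | p ∈ Set.range x.2.1 ∧ p.2 ≠ z₀}

/-- The relation identifying two labelled pre-configurations when they agree after
reordering the points and deleting the points labelled by the basepoint `z₀`; this
is the equivalence relation generated by permutations and basepoint deletions. -/
def ConfigRel (M Z : Type*) (z₀ : Z) (x y : PreConfig M Z) : Prop :=
  configCore z₀ x = configCore z₀ y

/-- The configuration space `C(M;Z)` of `M` with labels in the pointed space
`(Z, z₀)`, with the quotient topology. -/
abbrev LabelledConfig (M Z : Type*) [TopologicalSpace M] [TopologicalSpace Z]
    (z₀ : Z) : Type _ :=
  Quot (ConfigRel M Z z₀)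

/-- The filtration stage `C^{≤k}(M;Z) ⊆ C(M;Z)`: the image of the strata with at
most `k` points. -/
def configFiltration (M Z : Type*) [TopologicalSpace M] [TopologicalSpace Z]
    (z₀ : Z) (k : ℕ) : Set (LabelledConfig M Z z₀) :=
  {c | ∃ x : PreConfig M Z, x.1 ≤ k ∧ Quot.mk (ConfigRel M Z z₀) x = c}

/-- The empty configuration, as a pre-configuration. -/
def emptyPre (M Z : Type*) : PreConfig M Z :=
  ⟨0, ⟨fun i => i.elim0, fun a _ _ => a.elim0⟩⟩

/-- The ordered configuration space `C̃_k(M)` of `k` pairwise distinct points in a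
topological space `M`, as a subspace of `M^k`. -/
abbrev OrderedConfig (M : Type*) [TopologicalSpace M] (k : ℕ) : Type _ :=
  {x : Fin k → M // Function.Injective x}

/-- The underlying space of `C̃_k(M)_+ ∧_{Σ_k} Z^{∧k}` before quotienting:
`C̃_k(M) × Z^k` together with a disjoint basepoint. -/
abbrev SmashBase (M Z : Type*) [TopologicalSpace M] [TopologicalSpace Z] (k : ℕ) :
    Type _ :=
  (OrderedConfig M k × (Fin k → Z)) ⊕ Unit

/-- The relation on `(C̃_k(M) × Z^k) ⊔ {*}` generating the quotient
`C̃_k(M)_+ ∧_{Σ_k} Z^{∧k}`: two labelled tuples are identified when they differ by a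
simultaneous permutation of points and labels, and a labelled tuple is identified
with the basepoint when at least one of its labels equals `z₀`. -/
def SmashRel (M Z : Type*) [TopologicalSpace M] [TopologicalSpace Z] (z₀ : Z)
    (k : ℕ) : SmashBase M Z k → SmashBase M Z k → Prop
  | Sum.inl a, Sum.inl b =>
      ∃ σ : Equiv.Perm (Fin k), (∀ i, b.1.1 i = a.1.1 (σ i)) ∧ ∀ i, b.2 i = a.2 (σ i)
  | Sum.inl a, Sum.inr _ => ∃ i, a.2 i = z₀
  | Sum.inr _, Sum.inl b => ∃ i, b.2 i = z₀
  | Sum.inr _, Sum.inr _ => True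

/-- The pointed space `C̃_k(M)_+ ∧_{Σ_k} Z^{∧k}`: the quotient of `C̃_k(M) × Z^k`
collapsing to a single (disjointly added) basepoint the subspace where at least one
label equals `z₀`, and further quotienting by the diagonal `Σ_k`-action. -/
abbrev EquivariantSmash (M Z : Type*) [TopologicalSpace M] [TopologicalSpace Z]
    (z₀ : Z) (k : ℕ) : Type _ :=
  Quot (SmashRel M Z z₀ k)

/-- The labelled configuration in `C(M;Z)` determined by an ordered configuration
together with a tuple of labels. -/
def toPre (M Z : Type*) [TopologicalSpace M] (k : ℕ)
    (x : OrderedConfig M k) (z : Fin k → Z) : PreConfig M Z :=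
  ⟨k, ⟨fun i => (x.1 i, z i), fun a b h => x.2 h⟩⟩

/-- The relation on `C^{≤k}(M;Z)` (with the subspace topology) generating the
quotient `C^{≤k}(M;Z)/C^{≤k-1}(M;Z)`: all points of `C^{≤k-1}(M;Z)` are collapsed
to a single point. -/
def CollapseRel (M Z : Type*) [TopologicalSpace M] [TopologicalSpace Z] (z₀ : Z)
    (k : ℕ) (a b : ↥(configFiltration M Z z₀ k)) : Prop :=
  a = b ∨ ((a : LabelledConfig M Z z₀) ∈ configFiltration M Z z₀ (k - 1) ∧
    (b : LabelledConfig M Z z₀) ∈ configFiltration M Z z₀ (k - 1))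

/-- The subquotient `C^{≤k}(M;Z)/C^{≤k-1}(M;Z)` of the labelled configuration
space. -/
abbrev FiltrationQuotient (M Z : Type*) [TopologicalSpace M] [TopologicalSpace Z]
    (z₀ : Z) (k : ℕ) : Type _ :=
  Quot (CollapseRel M Z z₀ k)

set_option linter.unusedSectionVars false
set_option linter.unusedVariables false

-- ============ auxiliary development ============
namespace SmashHomeoAux

variable {M Z : Type*} [TopologicalSpace M] [TopologicalSpace Z]

/-- One stratum of pre-configurations. -/
abbrev Stratum (M Z : Type*) (m : ℕ) : Type _ :=
  {f : Fin m → M × Z // Function.Injective fun i => (f i).1}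

lemma configRel_equivalence (z₀ : Z) : Equivalence (ConfigRel M Z z₀) :=
  ⟨fun _ => rfl, Eq.symm, Eq.trans⟩

lemma configMk_eq_iff (z₀ : Z) (x y : PreConfig M Z) :
    Quot.mk (ConfigRel M Z z₀) x = Quot.mk (ConfigRel M Z z₀) y ↔
      configCore z₀ x = configCore z₀ y :=
  ⟨fun h => ((configRel_equivalence z₀).eqvGen_iff).mp (Quot.eqvGen_exact h), fun h => Quot.sound (r := ConfigRel M Z z₀) h⟩

lemma collapseRel_equivalence (z₀ : Z) (k : ℕ) : Equivalence (CollapseRel M Z z₀ k) := by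
  constructor
  · exact fun _ => Or.inl rfl
  · rintro a b (rfl | ⟨h1, h2⟩)
    · exact Or.inl rfl
    · exact Or.inr ⟨h2, h1⟩
  · rintro a b c (rfl | ⟨h1, h2⟩) (rfl | ⟨h3, h4⟩)
    · exact Or.inl rfl
    · exact Or.inr ⟨h3, h4⟩
    · exact Or.inr ⟨h1, h2⟩
    · exact Or.inr ⟨h1, h4⟩

lemma collapseMk_eq_iff (z₀ : Z) (k : ℕ) (a b : ↥(configFiltration M Z z₀ k)) :
    Quot.mk (CollapseRel M Z z₀ k) a = Quot.mk (CollapseRel M Z z₀ k) b ↔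
      CollapseRel M Z z₀ k a b :=
  ⟨fun h => ((collapseRel_equivalence z₀ k).eqvGen_iff).mp (Quot.eqvGen_exact h), fun h => Quot.sound (r := CollapseRel M Z z₀ k) h⟩

/-- The core of a labelled configuration. -/
def coreOf (z₀ : Z) : LabelledConfig M Z z₀ → Set (M × Z) :=
  Quot.lift (configCore z₀) fun _ _ h => h

@[simp] lemma coreOf_mk (z₀ : Z) (x : PreConfig M Z) :
    coreOf z₀ (Quot.mk (ConfigRel M Z z₀) x) = configCore z₀ x := rfl

lemma core_subset (z₀ : Z) (x : PreConfig M Z) :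
    configCore z₀ x ⊆ Set.range x.2.1 := fun _ hp => hp.1

lemma core_finite (z₀ : Z) (x : PreConfig M Z) : (configCore z₀ x).Finite :=
  (Set.finite_range x.2.1).subset (core_subset z₀ x)

lemma core_injOn (z₀ : Z) (x : PreConfig M Z) :
    Set.InjOn Prod.fst (configCore z₀ x) := by
  rintro p hp q hq h
  obtain ⟨i, hi⟩ := hp.1
  obtain ⟨j, hj⟩ := hq.1
  subst hi; subst hj
  have := x.2.2 (a₁ := i) (a₂ := j) h
  rw [this]

lemma coreOf_finite (z₀ : Z) (c : LabelledConfig M Z z₀) : (coreOf z₀ c).Finite := by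
  induction c using Quot.ind with
  | _ x => exact core_finite z₀ x

lemma coreOf_injOn (z₀ : Z) (c : LabelledConfig M Z z₀) :
    Set.InjOn Prod.fst (coreOf z₀ c) := by
  induction c using Quot.ind with
  | _ x => exact core_injOn z₀ x

lemma inj_of_fst_inj {m : ℕ} {f : Fin m → M × Z}
    (h : Function.Injective fun i => (f i).1) : Function.Injective f :=
  fun i j e => h (congrArg Prod.fst e)

lemma ncard_range {m : ℕ} (f : Fin m → M × Z)
    (hf : Function.Injective f) : (Set.range f).ncard = m := by
  rw [← Set.image_univ, Set.ncard_image_of_injective _ hf, Set.ncard_univ,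
    Nat.card_eq_fintype_card, Fintype.card_fin]

lemma exists_enum (T : Set (M × Z)) (hT : T.Finite) (hinj : Set.InjOn Prod.fst T)
    (r : ℕ) (hr : T.ncard = r) : ∃ g : Stratum M Z r, Set.range g.1 = T := by
  have hcard : hT.toFinset.card = r := by
    rw [← Set.ncard_eq_toFinset_card T hT]; exact hr
  let e := Finset.equivFinOfCardEq hcard
  have hmem : ∀ i, ((e.symm i : hT.toFinset) : M × Z) ∈ T := fun i =>
    hT.mem_toFinset.mp (e.symm i).2
  refine ⟨⟨fun i => ((e.symm i : hT.toFinset) : M × Z), ?_⟩, ?_⟩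
  · intro i j h
    have h2 : ((e.symm i : hT.toFinset) : M × Z) = ((e.symm j : hT.toFinset) : M × Z) :=
      hinj (hmem i) (hmem j) h
    have := e.symm.injective (Subtype.ext h2)
    exact this
  · ext p
    constructor
    · rintro ⟨i, rfl⟩; exact hmem i
    · intro hp; exact ⟨e ⟨p, hT.mem_toFinset.mpr hp⟩, by simp⟩

lemma core_mk_eq_range (z₀ : Z) {m : ℕ} (g : Stratum M Z m)
    (h : ∀ i, (g.1 i).2 ≠ z₀) :
    configCore z₀ (⟨m, g⟩ : PreConfig M Z) = Set.range g.1 :=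
  Set.ext fun p => ⟨fun hp => hp.1, fun hp => ⟨hp, by obtain ⟨i, rfl⟩ := hp; exact h i⟩⟩

lemma mem_filtration_iff (z₀ : Z) (c : LabelledConfig M Z z₀) (j : ℕ) :
    c ∈ configFiltration M Z z₀ j ↔ (coreOf z₀ c).ncard ≤ j := by
  constructor
  · rintro ⟨x, hx, rfl⟩
    calc (coreOf z₀ (Quot.mk _ x)).ncard
        ≤ (Set.range x.2.1).ncard :=
          Set.ncard_le_ncard (core_subset z₀ x) (Set.finite_range _)
      _ = x.1 := ncard_range x.2.1 (inj_of_fst_inj x.2.2)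
      _ ≤ j := hx
  · induction c using Quot.ind with
    | _ x =>
      intro h
      obtain ⟨g, hg⟩ := exists_enum (configCore z₀ x) (core_finite z₀ x)
        (core_injOn z₀ x) _ rfl
      refine ⟨⟨(configCore z₀ x).ncard, g⟩, h, Quot.sound ?_⟩
      show configCore z₀ _ = configCore z₀ x
      rw [core_mk_eq_range z₀ g, hg]
      intro i
      have hm : g.1 i ∈ Set.range g.1 := Set.mem_range_self i
      rw [hg] at hm
      exact hm.2


variable (z₀ : Z) (k : ℕ)

/-- The basepoint of the filtration quotient. -/
def bpt : FiltrationQuotient M Z z₀ k :=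
  Quot.mk (CollapseRel M Z z₀ k)
    ⟨Quot.mk (ConfigRel M Z z₀) (emptyPre M Z), ⟨emptyPre M Z, Nat.zero_le k, rfl⟩⟩

/-- The canonical map from the top stratum to the filtration quotient. -/
def q0 (g : Stratum M Z k) : FiltrationQuotient M Z z₀ k :=
  Quot.mk (CollapseRel M Z z₀ k)
    ⟨Quot.mk (ConfigRel M Z z₀) ⟨k, g⟩, ⟨⟨k, g⟩, le_refl k, rfl⟩⟩

lemma core_empty : configCore z₀ (emptyPre M Z) = ∅ := by
  ext p
  simp only [configCore, emptyPre, Set.mem_setOf_eq, Set.mem_empty_iff_false, iff_false]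
  rintro ⟨⟨i, -⟩, -⟩
  exact i.elim0

lemma collapse_eq_bpt (c : LabelledConfig M Z z₀) (hc : c ∈ configFiltration M Z z₀ k)
    (h : c ∈ configFiltration M Z z₀ (k - 1)) :
    Quot.mk (CollapseRel M Z z₀ k) ⟨c, hc⟩ = bpt z₀ k :=
  Quot.sound (Or.inr ⟨h, ⟨emptyPre M Z, Nat.zero_le _, rfl⟩⟩)

lemma mem_filtration_pred_of_label (g : Stratum M Z k) (i : Fin k)
    (h : (g.1 i).2 = z₀) :
    Quot.mk (ConfigRel M Z z₀) (⟨k, g⟩ : PreConfig M Z) ∈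
      configFiltration M Z z₀ (k - 1) := by
  rw [mem_filtration_iff]
  have hsub : configCore z₀ (⟨k, g⟩ : PreConfig M Z) ⊆ Set.range g.1 \ {g.1 i} := by
    rintro p ⟨hp1, hp2⟩
    refine ⟨hp1, ?_⟩
    simp only [Set.mem_singleton_iff]
    intro hpe
    exact hp2 (by rw [hpe]; exact h)
  calc (coreOf z₀ (Quot.mk (ConfigRel M Z z₀) (⟨k, g⟩ : PreConfig M Z))).ncard
      ≤ (Set.range g.1 \ {g.1 i}).ncard :=
        Set.ncard_le_ncard hsub ((Set.finite_range g.1).diff)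
    _ = (Set.range g.1).ncard - 1 :=
        Set.ncard_diff_singleton_of_mem (Set.mem_range_self i)
    _ ≤ k - 1 := by rw [ncard_range g.1 (inj_of_fst_inj g.2)]

lemma q0_eq_bpt_of_label (g : Stratum M Z k) (h : ∃ i, (g.1 i).2 = z₀) :
    q0 z₀ k g = bpt z₀ k := by
  obtain ⟨i, hi⟩ := h
  exact collapse_eq_bpt z₀ k _ _ (mem_filtration_pred_of_label z₀ k g i hi)

lemma label_of_q0_eq_bpt (hk : 1 ≤ k) (g : Stratum M Z k)
    (h : q0 z₀ k g = bpt z₀ k) : ∃ i, (g.1 i).2 = z₀ := by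
  by_contra hn
  push_neg at hn
  have hcore : configCore z₀ (⟨k, g⟩ : PreConfig M Z) = Set.range g.1 :=
    core_mk_eq_range z₀ g hn
  have hcard : (configCore z₀ (⟨k, g⟩ : PreConfig M Z)).ncard = k := by
    rw [hcore, ncard_range g.1 (inj_of_fst_inj g.2)]
  rcases (collapseMk_eq_iff z₀ k _ _).mp h with heq | ⟨hlow, -⟩
  · have hv : Quot.mk (ConfigRel M Z z₀) (⟨k, g⟩ : PreConfig M Z) =
        Quot.mk (ConfigRel M Z z₀) (emptyPre M Z) := congrArg Subtype.val heq
    have := (configMk_eq_iff z₀ _ _).mp hv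
    rw [core_empty, hcore] at this
    exact (Set.range_eq_empty_iff.mp this).false ⟨0, hk⟩
  · rw [mem_filtration_iff, coreOf_mk, hcard] at hlow
    omega

lemma q0_eq_mk (g : Stratum M Z k) (c : LabelledConfig M Z z₀)
    (hc : c ∈ configFiltration M Z z₀ k)
    (hr : Set.range g.1 = coreOf z₀ c) :
    q0 z₀ k g = Quot.mk (CollapseRel M Z z₀ k) ⟨c, hc⟩ := by
  have hlab : ∀ i, (g.1 i).2 ≠ z₀ := by
    intro i
    have hm : g.1 i ∈ Set.range g.1 := Set.mem_range_self i
    rw [hr] at hm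
    induction c using Quot.ind with
    | _ x => exact hm.2
  have hcore : configCore z₀ (⟨k, g⟩ : PreConfig M Z) = coreOf z₀ c := by
    rw [core_mk_eq_range z₀ g hlab, hr]
  induction c using Quot.ind with
  | _ x =>
    exact congrArg (Quot.mk _) (Subtype.ext (Quot.sound hcore))

lemma range_eq_coreOf (g : Stratum M Z k) (c : LabelledConfig M Z z₀)
    (hc : c ∈ configFiltration M Z z₀ k)
    (hsub : Set.range g.1 ⊆ coreOf z₀ c) : Set.range g.1 = coreOf z₀ c :=
  Set.eq_of_subset_of_ncard_le hsub
    (by rw [ncard_range g.1 (inj_of_fst_inj g.2)]; exact (mem_filtration_iff z₀ c k).mp hc)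
    (coreOf_finite z₀ c)

/-- Restriction of a stratum along an embedding of index sets. -/
def restEmb {m : ℕ} (ι : Fin k ↪ Fin m) (f : Stratum M Z m) : Stratum M Z k :=
  ⟨fun i => f.1 (ι i), fun a b h => ι.injective (f.2 h)⟩

lemma continuous_restEmb {m : ℕ} (ι : Fin k ↪ Fin m) :
    Continuous (restEmb (M := M) (Z := Z) k ι) := by
  unfold restEmb
  refine Continuous.subtype_mk ?_ _
  refine continuous_pi fun i => ?_
  have h1 : Continuous (Subtype.val : Stratum M Z m → (Fin m → M × Z)) :=
    continuous_subtype_val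
  exact (continuous_apply (ι i)).comp h1

/-- Given `g` in the `k`-th stratum supported inside the range of `f`, produce the
embedding realizing it. -/
lemma exists_emb {m : ℕ} (f : Stratum M Z m) (g : Stratum M Z k)
    (h : ∀ i, g.1 i ∈ Set.range f.1) :
    ∃ ι : Fin k ↪ Fin m, restEmb k ι f = g := by
  choose ν hν using h
  have hinj : Function.Injective ν := by
    intro a b hab
    apply inj_of_fst_inj g.2
    rw [← hν a, ← hν b, hab]
  exact ⟨⟨ν, hinj⟩, Subtype.ext (funext hν)⟩


/-- The key point-set statement: `q0` detects open sets of the filtration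
quotient, i.e. it is a quotient map onto the filtration quotient. -/
lemma isOpen_of_isOpen_preimage (hk : 1 ≤ k)
    (U : Set (FiltrationQuotient M Z z₀ k))
    (hU : IsOpen (q0 z₀ k ⁻¹' U)) : IsOpen U := by
  rw [← isQuotientMap_quot_mk.isOpen_preimage]
  rw [isOpen_induced_iff]
  by_cases hb : bpt z₀ k ∈ U
  · -- the basepoint belongs to `U`
    refine ⟨{c | ∀ g : Stratum M Z k, Set.range g.1 ⊆ coreOf z₀ c → q0 z₀ k g ∈ U},
      ?_, ?_⟩
    · rw [← isQuotientMap_quot_mk.isOpen_preimage, isOpen_sigma_iff]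
      intro m
      have hset : (Sigma.mk m ⁻¹' (Quot.mk (ConfigRel M Z z₀) ⁻¹'
          {c | ∀ g : Stratum M Z k, Set.range g.1 ⊆ coreOf z₀ c → q0 z₀ k g ∈ U})) =
          ⋂ ι : Fin k ↪ Fin m, restEmb k ι ⁻¹' (q0 z₀ k ⁻¹' U) := by
        ext f
        simp only [Set.mem_preimage, Set.mem_setOf_eq, Set.mem_iInter, coreOf_mk]
        constructor
        · intro h ι
          by_cases hl : ∃ i, ((restEmb k ι f).1 i).2 = z₀
          · show q0 z₀ k _ ∈ U
            rw [q0_eq_bpt_of_label z₀ k _ hl]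
            exact hb
          · push_neg at hl
            refine h _ ?_
            rintro p ⟨i, rfl⟩
            exact ⟨⟨ι i, rfl⟩, hl i⟩
        · intro h g hsub
          have hmem : ∀ i, g.1 i ∈ Set.range f.1 := fun i =>
            (hsub (Set.mem_range_self i)).1
          obtain ⟨ι, rfl⟩ := exists_emb k f g hmem
          exact h ι
      rw [hset]
      exact isOpen_iInter_of_finite fun ι => (continuous_restEmb k ι).isOpen_preimage _ hU
    · ext c
      obtain ⟨c, hc⟩ := c
      simp only [Set.mem_preimage, Set.mem_setOf_eq]
      constructor
      · intro h
        by_cases hcard : (coreOf z₀ c).ncard ≤ k - 1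
        · rw [collapse_eq_bpt z₀ k c hc ((mem_filtration_iff z₀ c (k - 1)).mpr hcard)]
          exact hb
        · have hk2 : (coreOf z₀ c).ncard = k := by
            have := (mem_filtration_iff z₀ c k).mp hc
            omega
          obtain ⟨g, hg⟩ := exists_enum (coreOf z₀ c) (coreOf_finite z₀ c)
            (coreOf_injOn z₀ c) k hk2
          rw [← q0_eq_mk z₀ k g c hc hg]
          exact h g hg.le
      · intro h g hsub
        rw [q0_eq_mk z₀ k g c hc (range_eq_coreOf z₀ k g c hc hsub)]
        exact h
  · -- the basepoint does not belong to `U`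
    refine ⟨{c | ∃ g : Stratum M Z k, Set.range g.1 ⊆ coreOf z₀ c ∧ q0 z₀ k g ∈ U},
      ?_, ?_⟩
    · rw [← isQuotientMap_quot_mk.isOpen_preimage, isOpen_sigma_iff]
      intro m
      have hset : (Sigma.mk m ⁻¹' (Quot.mk (ConfigRel M Z z₀) ⁻¹'
          {c | ∃ g : Stratum M Z k, Set.range g.1 ⊆ coreOf z₀ c ∧ q0 z₀ k g ∈ U})) =
          ⋃ ι : Fin k ↪ Fin m, restEmb k ι ⁻¹' (q0 z₀ k ⁻¹' U) := by
        ext f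
        simp only [Set.mem_preimage, Set.mem_setOf_eq, Set.mem_iUnion, coreOf_mk]
        constructor
        · rintro ⟨g, hsub, hq⟩
          have hmem : ∀ i, g.1 i ∈ Set.range f.1 := fun i =>
            (hsub (Set.mem_range_self i)).1
          obtain ⟨ι, rfl⟩ := exists_emb k f g hmem
          exact ⟨ι, hq⟩
        · rintro ⟨ι, hq⟩
          refine ⟨restEmb k ι f, ?_, hq⟩
          have hl : ∀ i, ((restEmb k ι f).1 i).2 ≠ z₀ := by
            intro i hi
            rw [show (q0 z₀ k (restEmb k ι f)) = bpt z₀ k from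
              q0_eq_bpt_of_label z₀ k _ ⟨i, hi⟩] at hq
            exact hb hq
          rintro p ⟨i, rfl⟩
          exact ⟨⟨ι i, rfl⟩, hl i⟩
      rw [hset]
      exact isOpen_iUnion fun ι => (continuous_restEmb k ι).isOpen_preimage _ hU
    · ext c
      obtain ⟨c, hc⟩ := c
      simp only [Set.mem_preimage, Set.mem_setOf_eq]
      constructor
      · rintro ⟨g, hsub, hq⟩
        rw [← q0_eq_mk z₀ k g c hc (range_eq_coreOf z₀ k g c hc hsub)]
        exact hq
      · intro h
        by_cases hcard : (coreOf z₀ c).ncard ≤ k - 1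
        · exfalso
          rw [collapse_eq_bpt z₀ k c hc ((mem_filtration_iff z₀ c (k - 1)).mpr hcard)] at h
          exact hb h
        · have hk2 : (coreOf z₀ c).ncard = k := by
            have := (mem_filtration_iff z₀ c k).mp hc
            omega
          obtain ⟨g, hg⟩ := exists_enum (coreOf z₀ c) (coreOf_finite z₀ c)
            (coreOf_injOn z₀ c) k hk2
          refine ⟨g, hg.le, ?_⟩
          rw [q0_eq_mk z₀ k g c hc hg]
          exact h


/-- The canonical inclusion of `C̃_k(M) × Z^k` into the top stratum. -/
def emb (a : OrderedConfig M k × (Fin k → Z)) : Stratum M Z k :=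
  ⟨fun i => (a.1.1 i, a.2 i), fun i j h => a.1.2 h⟩

lemma continuous_emb : Continuous (emb (M := M) (Z := Z) k) := by
  unfold emb
  refine Continuous.subtype_mk ?_ _
  refine continuous_pi fun i => ?_
  refine Continuous.prodMk ?_ ?_
  · have h1 : Continuous (Subtype.val : OrderedConfig M k → (Fin k → M)) :=
      continuous_subtype_val
    exact ((continuous_apply i).comp h1).comp continuous_fst
  · exact (continuous_apply i).comp continuous_snd

/-- Splitting a stratum point into an ordered configuration and labels. -/
def split (g : Stratum M Z k) : OrderedConfig M k × (Fin k → Z) :=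
  (⟨fun i => (g.1 i).1, g.2⟩, fun i => (g.1 i).2)

lemma emb_split (g : Stratum M Z k) : emb k (split k g) = g :=
  Subtype.ext (funext fun _ => rfl)

/-- The underlying function of the canonical map. -/
def phiFun : SmashBase M Z k → FiltrationQuotient M Z z₀ k :=
  Sum.elim (fun a => q0 z₀ k (emb k a)) fun _ => bpt z₀ k

lemma phiFun_sound : ∀ a b, SmashRel M Z z₀ k a b → phiFun z₀ k a = phiFun z₀ k b := by
  rintro (a | a) (b | b) h
  · obtain ⟨σ, h1, h2⟩ := h
    have hfun : (emb (M := M) (Z := Z) k b).1 = (emb k a).1 ∘ σ := by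
      funext i
      exact Prod.ext (h1 i) (h2 i)
    have hrange : Set.range (emb (M := M) (Z := Z) k b).1 = Set.range (emb k a).1 := by
      rw [hfun]
      exact σ.surjective.range_comp _
    have hcore : configCore z₀ (⟨k, emb k b⟩ : PreConfig M Z) =
        configCore z₀ (⟨k, emb k a⟩ : PreConfig M Z) := by
      unfold configCore
      ext p
      rw [Set.mem_setOf_eq, Set.mem_setOf_eq]
      show p ∈ Set.range (emb k b).1 ∧ _ ↔ p ∈ Set.range (emb k a).1 ∧ _
      rw [hrange]
    exact (congrArg (Quot.mk (CollapseRel M Z z₀ k))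
      (Subtype.ext (Quot.sound (r := ConfigRel M Z z₀) hcore))).symm
  · exact q0_eq_bpt_of_label z₀ k (emb k a) (h : ∃ i, a.2 i = z₀)
  · exact (q0_eq_bpt_of_label z₀ k (emb k b) (h : ∃ i, b.2 i = z₀)).symm
  · rfl

/-- The canonical map `C̃_k(M)_+ ∧_{Σ_k} Z^{∧k} → C^{≤k}(M;Z)/C^{≤k-1}(M;Z)`. -/
def phi : EquivariantSmash M Z z₀ k → FiltrationQuotient M Z z₀ k :=
  Quot.lift (phiFun z₀ k) (phiFun_sound z₀ k)

lemma continuous_q0 : Continuous (q0 (M := M) (Z := Z) z₀ k) := by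
  unfold q0
  refine continuous_quot_mk.comp (Continuous.subtype_mk ?_ _)
  exact continuous_quot_mk.comp continuous_sigmaMk

lemma continuous_phi : Continuous (phi (M := M) (Z := Z) z₀ k) := by
  apply continuous_quot_lift
  exact Continuous.sumElim ((continuous_q0 z₀ k).comp (continuous_emb k)) continuous_const

lemma phi_surjective (hk : 1 ≤ k) : Function.Surjective (phi (M := M) (Z := Z) z₀ k) := by
  intro y
  induction y using Quot.ind with
  | _ c =>
    obtain ⟨c, hc⟩ := c
    by_cases hcard : (coreOf z₀ c).ncard ≤ k - 1
    · exact ⟨Quot.mk _ (Sum.inr ()),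
        (collapse_eq_bpt z₀ k c hc ((mem_filtration_iff z₀ c (k - 1)).mpr hcard)).symm⟩
    · have hk2 : (coreOf z₀ c).ncard = k := by
        have := (mem_filtration_iff z₀ c k).mp hc
        omega
      obtain ⟨g, hg⟩ := exists_enum (coreOf z₀ c) (coreOf_finite z₀ c)
        (coreOf_injOn z₀ c) k hk2
      refine ⟨Quot.mk _ (Sum.inl (split k g)), ?_⟩
      show q0 z₀ k (emb k (split k g)) = _
      rw [emb_split]
      exact q0_eq_mk z₀ k g c hc hg

lemma phi_injective (hk : 1 ≤ k) : Function.Injective (phi (M := M) (Z := Z) z₀ k) := by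
  intro e1 e2 h
  induction e1 using Quot.ind with
  | _ a =>
  induction e2 using Quot.ind with
  | _ b =>
  match a, b with
  | Sum.inl a, Sum.inl b =>
    by_cases ha : ∃ i, a.2 i = z₀
    · have h1 : phiFun z₀ k (Sum.inl a) = bpt z₀ k := q0_eq_bpt_of_label z₀ k _ ha
      have h' : phiFun z₀ k (Sum.inl a) = phiFun z₀ k (Sum.inl b) := h
      have h2 : phiFun z₀ k (Sum.inl b) = bpt z₀ k := by
        rw [← h']; exact h1
      have hbl : ∃ i, b.2 i = z₀ := label_of_q0_eq_bpt z₀ k hk _ h2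
      exact (Quot.sound (show SmashRel M Z z₀ k (Sum.inl a) (Sum.inr ()) from ha)).trans
        (Quot.sound (show SmashRel M Z z₀ k (Sum.inr ()) (Sum.inl b) from hbl))
    · have hbl : ¬ ∃ i, b.2 i = z₀ := by
        intro hbl
        have h2 : phiFun z₀ k (Sum.inl b) = bpt z₀ k := q0_eq_bpt_of_label z₀ k _ hbl
        exact ha (label_of_q0_eq_bpt z₀ k hk _ (h.trans h2))
      have hq : q0 z₀ k (emb k a) = q0 z₀ k (emb k b) := h
      rcases (collapseMk_eq_iff z₀ k _ _).mp hq with heq | ⟨hlow, -⟩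
      · have hv : Quot.mk (ConfigRel M Z z₀) (⟨k, emb k a⟩ : PreConfig M Z) =
            Quot.mk (ConfigRel M Z z₀) (⟨k, emb k b⟩ : PreConfig M Z) :=
          congrArg Subtype.val heq
        have hcore := (configMk_eq_iff z₀ _ _).mp hv
        push_neg at ha hbl
        rw [core_mk_eq_range z₀ (emb k a) ha, core_mk_eq_range z₀ (emb k b) hbl] at hcore
        have hmem : ∀ i, (emb k b).1 i ∈ Set.range (emb k a).1 := by
          intro i
          rw [hcore]
          exact Set.mem_range_self i
        choose ν hν using hmem
        have hinj : Function.Injective ν := by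
          intro i j hij
          apply inj_of_fst_inj (emb k b).2
          rw [← hν i, ← hν j, hij]
        let σ : Equiv.Perm (Fin k) := Equiv.ofBijective ν (Finite.injective_iff_bijective.mp hinj)
        refine Quot.sound (show SmashRel M Z z₀ k (Sum.inl a) (Sum.inl b) from ⟨σ, ?_, ?_⟩)
        · intro i
          exact (congrArg Prod.fst (hν i)).symm
        · intro i
          exact (congrArg Prod.snd (hν i)).symm
      · exfalso
        push_neg at ha
        rw [mem_filtration_iff, coreOf_mk, core_mk_eq_range z₀ (emb k a) ha,
          ncard_range _ (inj_of_fst_inj (emb k a).2)] at hlow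
        omega
  | Sum.inl a, Sum.inr b =>
    have h2 : phiFun z₀ k (Sum.inl a) = bpt z₀ k := h
    exact Quot.sound (show SmashRel M Z z₀ k (Sum.inl a) (Sum.inr b) from
      label_of_q0_eq_bpt z₀ k hk _ h2)
  | Sum.inr a, Sum.inl b =>
    have h2 : phiFun z₀ k (Sum.inl b) = bpt z₀ k := h.symm
    exact Quot.sound (show SmashRel M Z z₀ k (Sum.inr a) (Sum.inl b) from
      label_of_q0_eq_bpt z₀ k hk _ h2)
  | Sum.inr a, Sum.inr b =>
    exact Quot.sound (show SmashRel M Z z₀ k (Sum.inr a) (Sum.inr b) from trivial)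


lemma continuous_split : Continuous (split (M := M) (Z := Z) k) := by
  unfold split
  refine Continuous.prodMk ?_ ?_
  · refine Continuous.subtype_mk ?_ _
    refine continuous_pi fun i => ?_
    have h1 : Continuous (Subtype.val : Stratum M Z k → (Fin k → M × Z)) :=
      continuous_subtype_val
    exact continuous_fst.comp ((continuous_apply i).comp h1)
  · refine continuous_pi fun i => ?_
    have h1 : Continuous (Subtype.val : Stratum M Z k → (Fin k → M × Z)) :=
      continuous_subtype_val
    exact continuous_snd.comp ((continuous_apply i).comp h1)

end SmashHomeoAux

/-- Let `M` be a boundaryless topological manifold of dimension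
`n ≥ 1` (Hausdorff, second countable, locally modelled on `ℝ^n`), let `(Z, z₀)` be
a pointed space and `k ≥ 1`.  Then the canonical map
`C̃_k(M) × Z^k → C^{≤k}(M;Z)/C^{≤k-1}(M;Z)` descends to a pointed homeomorphism
`C̃_k(M)_+ ∧_{Σ_k} Z^{∧k} ≅ C^{≤k}(M;Z)/C^{≤k-1}(M;Z)`. -/
theorem smash_homeo_filtrationQuotient (n : ℕ) (hn : 1 ≤ n) (M : Type*)
    [TopologicalSpace M] [T2Space M] [SecondCountableTopology M]
    [ChartedSpace (EuclideanSpace ℝ (Fin n)) M]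
    (Z : Type*) [TopologicalSpace Z] (z₀ : Z) (k : ℕ) (hk : 1 ≤ k) :
    ∃ h : EquivariantSmash M Z z₀ k ≃ₜ FiltrationQuotient M Z z₀ k,
      (∀ (x : OrderedConfig M k) (z : Fin k → Z),
        h (Quot.mk (SmashRel M Z z₀ k) (Sum.inl (x, z))) =
          Quot.mk (CollapseRel M Z z₀ k)
            ⟨Quot.mk (ConfigRel M Z z₀) (toPre M Z k x z),
              ⟨toPre M Z k x z, le_refl k, rfl⟩⟩) ∧
      h (Quot.mk (SmashRel M Z z₀ k) (Sum.inr ())) =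
        Quot.mk (CollapseRel M Z z₀ k)
          ⟨Quot.mk (ConfigRel M Z z₀) (emptyPre M Z),
            ⟨emptyPre M Z, Nat.zero_le k, rfl⟩⟩ := by
  classical
  let e : EquivariantSmash M Z z₀ k ≃ FiltrationQuotient M Z z₀ k :=
    Equiv.ofBijective (SmashHomeoAux.phi z₀ k)
      ⟨SmashHomeoAux.phi_injective z₀ k hk, SmashHomeoAux.phi_surjective z₀ k hk⟩
  have hcont : Continuous e := SmashHomeoAux.continuous_phi z₀ k
  have hinv : Continuous e.symm := by
    rw [continuous_def]
    intro V hV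
    have himg : e.symm ⁻¹' V = e '' V := (e.image_eq_preimage_symm V).symm
    rw [himg]
    apply SmashHomeoAux.isOpen_of_isOpen_preimage z₀ k hk
    have hset : SmashHomeoAux.q0 z₀ k ⁻¹' (e '' V) =
        (fun g => Quot.mk (SmashRel M Z z₀ k) (Sum.inl (SmashHomeoAux.split k g))) ⁻¹' V := by
      ext g
      have he : e (Quot.mk (SmashRel M Z z₀ k) (Sum.inl (SmashHomeoAux.split k g))) =
          SmashHomeoAux.q0 z₀ k g := by
        show SmashHomeoAux.q0 z₀ k (SmashHomeoAux.emb k (SmashHomeoAux.split k g)) = _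
        rw [SmashHomeoAux.emb_split]
      rw [Set.mem_preimage, Set.mem_preimage, e.image_eq_preimage_symm, Set.mem_preimage,
        ← he, e.symm_apply_apply]
    rw [hset]
    refine IsOpen.preimage ?_ hV
    exact continuous_quot_mk.comp (continuous_inl.comp (SmashHomeoAux.continuous_split k))
  refine ⟨{ toEquiv := e, continuous_toFun := hcont, continuous_invFun := hinv }, ?_, ?_⟩
  · intro x z
    rfl
  · rfl


end
end
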